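/- arXiv:2105.07199 — 9 statements merged into one kernel-verified Lean document; each statement's English description precedes it below -/
import Mathlib

section
/- Let R be an mN×mN symmetric positive definite matrix, Q a pN×pN symmetric positive semidefinite matrix, and λ_u, λ_y > 0. Let Ū_P ∈ ℝ^{mT_ini×H_c}, Ȳ_P ∈ ℝ^{pT_ini×H_c}, Ū_F ∈ ℝ^{mN×H_c}, Ȳ_F ∈ ℝ^{pN×H_c} be matrices, and ū_ini ∈ ℝ^{mT_ini}, ȳ_ini ∈ ℝ^{pT_ini}, u_sys ∈ ℝ^{mN}, y_sys ∈ ℝ^{pN}, r ∈ ℝ^{pN}, g* ∈ ℝ^{H_c} vectors. Assume: (i) there exists ḡ ∈ ℝ^{H_c} with Ū_P ḡ = ū_ini, Ȳ_P ḡ = ȳ_ini, Ū_F ḡ = u_sys, Ȳ_F ḡ = y_sys; (ii) there exist matrices K ∈ ℝ^{pN×(m+p)T_ini} and T ∈ ℝ^{pN×mN} such that for every Δ ∈ ℝ^{H_c}, Ȳ_F Δ = K·col(Ū_P Δ, Ȳ_P Δ) + T·(Ū_F Δ); (iii) the block-diagonal matrix Λ := diag(λ_u I_{mT_ini}, λ_y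 I_{pT_ini}) satisfies Λ ⪰ KᵀQK; (iv) ‖u_sys − Ū_F g*‖ ≤ η_p for some η_p ≥ 0; (v) the scalar c_opt ≥ 0 satisfies c_opt ≥ ‖Ū_F g*‖_R² + ‖Ȳ_F g* − r‖_Q² + λ_u‖Ū_P g* − ū_ini‖² + λ_y‖Ȳ_P g* − ȳ_ini‖². Then 2√c_opt + η_p(√2·‖I_{mN}‖_R + ‖T‖_Q) ≥ √(‖u_sys‖_R² + ‖y_sys − r‖_Q²). -/
open Matrix

/-- Euclidean norm of a vector in `ℝ^n`. -/
noncomputable def enorm2 {n : ℕ} (x : Fin n → ℝ) : ℝ := Real.sqrt (∑ i, x i ^ 2)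

/-- The positive semidefinite square root of a positive semidefinite matrix
(the definition `Matrix.PosSemidef.sqrt` of the older Mathlib, since removed). -/
noncomputable def Matrix.PosSemidef.sqrt {n : Type*} [Fintype n] [DecidableEq n]
    {A : Matrix n n ℝ} (hA : A.PosSemidef) : Matrix n n ℝ :=
  hA.1.eigenvectorUnitary.1 * diagonal ((↑) ∘ (Real.sqrt ∘ hA.1.eigenvalues)) *
    (star hA.1.eigenvectorUnitary : Matrix n n ℝ)

/-- Induced 2-norm of a real matrix. -/
noncomputable def opNorm2 {m n : ℕ} (M : Matrix (Fin m) (Fin n) ℝ) : ℝ :=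
  sSup {c | ∃ x : Fin n → ℝ, enorm2 x ≤ 1 ∧ c = enorm2 (M.mulVec x)}

/-! Write `‖x‖_S` for `enorm2 (√S *ᵥ x)`, so that `xᵀ S x = ‖x‖_S²`. With `e := u_sys - U_F g*`,
the realized input is `U_F g* + e`, and the ARX relation applied to `ḡ - g*` writes the realized
output as `Y_F g* + K col(u_ini - U_P g*, y_ini - Y_P g*) + T e`. The condition `Λ ⪰ KᵀQK` bounds
the `Q`-norm of the middle term by the regularization part of the cost. The triangle inequality
then bounds `‖u_sys‖_R + ‖y_sys - r‖_Q` by three square roots of cost terms, whose sum is at most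
`√3 · √c_opt ≤ 2 √c_opt`, plus `η_p (‖I‖_R + ‖T‖_Q)`. -/

theorem enorm2_eq_norm {n : ℕ} (x : Fin n → ℝ) : enorm2 x = ‖WithLp.toLp 2 x‖ := by
  simp [enorm2, EuclideanSpace.norm_eq]

theorem enorm2_nonneg {n : ℕ} (x : Fin n → ℝ) : 0 ≤ enorm2 x :=
  Real.sqrt_nonneg _

theorem enorm2_add_le {n : ℕ} (x y : Fin n → ℝ) : enorm2 (x + y) ≤ enorm2 x + enorm2 y := by
  simpa only [enorm2_eq_norm, WithLp.toLp_add] using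
    norm_add_le (WithLp.toLp 2 x) (WithLp.toLp 2 y)

theorem enorm2_sub_comm {n : ℕ} (x y : Fin n → ℝ) : enorm2 (x - y) = enorm2 (y - x) := by
  simpa only [enorm2_eq_norm, WithLp.toLp_sub] using
    norm_sub_rev (WithLp.toLp 2 x) (WithLp.toLp 2 y)

theorem sq_enorm2 {n : ℕ} (x : Fin n → ℝ) : enorm2 x ^ 2 = x ⬝ᵥ x := by
  rw [enorm2, Real.sq_sqrt (by positivity)]
  simp [dotProduct, sq]

theorem opNorm2_eq_norm {m n : ℕ} (M : Matrix (Fin m) (Fin n) ℝ) :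
    opNorm2 M = ‖(toEuclideanLin M).toContinuousLinearMap‖ := by
  rw [← ContinuousLinearMap.sSup_unitClosedBall_eq_norm, opNorm2]
  congr 1
  ext c
  simp only [Set.mem_ofPred_eq, Set.mem_image, Metric.mem_closedBall, dist_zero_right]
  constructor
  · rintro ⟨x, hx, rfl⟩
    exact ⟨WithLp.toLp 2 x, by rwa [← enorm2_eq_norm], by simp [enorm2_eq_norm]⟩
  · rintro ⟨x, hx, rfl⟩
    exact ⟨x.ofLp, by simpa [enorm2_eq_norm] using hx, by simp [enorm2_eq_norm]; rfl⟩

theorem opNorm2_nonneg {m n : ℕ} (M : Matrix (Fin m) (Fin n) ℝ) : 0 ≤ opNorm2 M :=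
  opNorm2_eq_norm M ▸ norm_nonneg _

theorem enorm2_mulVec_le {m n : ℕ} (M : Matrix (Fin m) (Fin n) ℝ) (x : Fin n → ℝ) :
    enorm2 (M *ᵥ x) ≤ opNorm2 M * enorm2 x := by
  rw [opNorm2_eq_norm, enorm2_eq_norm, enorm2_eq_norm]
  exact (toEuclideanLin M).toContinuousLinearMap.le_opNorm (WithLp.toLp 2 x)

theorem enorm2_mulVec_add_le {k m n : ℕ} (S : Matrix (Fin k) (Fin m) ℝ)
    (M : Matrix (Fin m) (Fin n) ℝ) (x : Fin m → ℝ) {e : Fin n → ℝ} {η : ℝ}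
    (he : enorm2 e ≤ η) :
    enorm2 (S *ᵥ (x + M *ᵥ e)) ≤ enorm2 (S *ᵥ x) + opNorm2 (S * M) * η := by
  rw [mulVec_add, mulVec_mulVec]
  calc _ ≤ enorm2 (S *ᵥ x) + enorm2 ((S * M) *ᵥ e) := enorm2_add_le _ _
    _ ≤ _ := by grw [enorm2_mulVec_le (S * M) e, he]; exact opNorm2_nonneg _

theorem Matrix.PosSemidef.sqrt_mul_sqrt {n : Type*} [Fintype n] [DecidableEq n]
    {S : Matrix n n ℝ} (hS : S.PosSemidef) : hS.sqrt * hS.sqrt = S := by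
  conv_rhs => rw [hS.1.spectral_theorem, Unitary.conjStarAlgAut_apply]
  simp only [Matrix.PosSemidef.sqrt, Matrix.mul_assoc]
  rw [← Matrix.mul_assoc _ hS.1.eigenvectorUnitary.1, Unitary.coe_star_mul_self, Matrix.one_mul,
    ← Matrix.mul_assoc (diagonal _), diagonal_mul_diagonal]
  congr 3
  funext i
  simp [Real.mul_self_sqrt (hS.eigenvalues_nonneg i)]

theorem Matrix.PosSemidef.transpose_sqrt {n : Type*} [Fintype n] [DecidableEq n]
    {S : Matrix n n ℝ} (hS : S.PosSemidef) : hS.sqrtᵀ = hS.sqrt := by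
  simp only [Matrix.PosSemidef.sqrt, ← conjTranspose_eq_transpose_of_trivial, conjTranspose_mul,
    Matrix.star_eq_conjTranspose, conjTranspose_conjTranspose, diagonal_conjTranspose,
    star_trivial, Matrix.mul_assoc]

theorem Matrix.PosSemidef.dotProduct_mulVec_eq_sq_enorm2_sqrt {n : ℕ}
    {S : Matrix (Fin n) (Fin n) ℝ} (hS : S.PosSemidef) (x : Fin n → ℝ) :
    x ⬝ᵥ S *ᵥ x = enorm2 (hS.sqrt *ᵥ x) ^ 2 := by
  conv_lhs => rw [← hS.sqrt_mul_sqrt, ← mulVec_mulVec, dotProduct_mulVec, ← mulVec_transpose,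
    hS.transpose_sqrt]
  rw [sq_enorm2]

theorem sq_enorm2_sqrt_mulVec_le {p k : ℕ} {Q : Matrix (Fin p) (Fin p) ℝ} (hQ : Q.PosSemidef)
    {K : Matrix (Fin p) (Fin k) ℝ} {Λ : Matrix (Fin k) (Fin k) ℝ}
    (hΛ : (Λ - Kᵀ * Q * K).PosSemidef) (w : Fin k → ℝ) :
    enorm2 (hQ.sqrt *ᵥ (K *ᵥ w)) ^ 2 ≤ w ⬝ᵥ Λ *ᵥ w := by
  have h := hΛ.dotProduct_mulVec_nonneg w
  rw [star_trivial, sub_mulVec, dotProduct_sub, sub_nonneg, ← mulVec_mulVec, ← mulVec_mulVec,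
    dotProduct_mulVec w Kᵀ, vecMul_transpose] at h
  rwa [← hQ.dotProduct_mulVec_eq_sq_enorm2_sqrt]

theorem dotProduct_diagonal_append_mulVec {m n : ℕ} (a b : ℝ) (u : Fin m → ℝ) (v : Fin n → ℝ) :
    Fin.append u v ⬝ᵥ diagonal (Fin.append (fun _ => a) (fun _ => b)) *ᵥ Fin.append u v
      = a * enorm2 u ^ 2 + b * enorm2 v ^ 2 := by
  simp only [sq_enorm2, dotProduct, mulVec_diagonal, Fin.sum_univ_add, Fin.append_left,
    Fin.append_right, Finset.mul_sum]
  congr 1 <;> exact Finset.sum_congr rfl fun i _ => by ring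

theorem sqrt_sq_add_sq_le_add {x y : ℝ} (hx : 0 ≤ x) (hy : 0 ≤ y) : √(x ^ 2 + y ^ 2) ≤ x + y :=
  Real.sqrt_le_iff.mpr ⟨add_nonneg hx hy, by nlinarith⟩

theorem add_add_le_two_mul_sqrt {a b c C : ℝ} (h : a ^ 2 + b ^ 2 + c ^ 2 ≤ C) :
    a + b + c ≤ 2 * √C := by
  have : (a + b + c) / 2 ≤ √C :=
    Real.le_sqrt_of_sq_le (by nlinarith [sq_nonneg (a - b), sq_nonneg (b - c), sq_nonneg (a - c)])
  linarith

theorem robust_deepc_performance_guarantee_general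
    (mN pN mTini pTini Hc : ℕ)
    (R : Matrix (Fin mN) (Fin mN) ℝ) (hR : R.PosDef)
    (Q : Matrix (Fin pN) (Fin pN) ℝ) (hQ : Q.PosSemidef)
    (lu ly : ℝ)
    (UP : Matrix (Fin mTini) (Fin Hc) ℝ) (YP : Matrix (Fin pTini) (Fin Hc) ℝ)
    (UF : Matrix (Fin mN) (Fin Hc) ℝ) (YF : Matrix (Fin pN) (Fin Hc) ℝ)
    (uini : Fin mTini → ℝ) (yini : Fin pTini → ℝ)
    (usys : Fin mN → ℝ) (ysys : Fin pN → ℝ) (r : Fin pN → ℝ)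
    (gs : Fin Hc → ℝ)
    (K : Matrix (Fin pN) (Fin (mTini + pTini)) ℝ)
    (T : Matrix (Fin pN) (Fin mN) ℝ)
    (ηp copt : ℝ) (hηp : 0 ≤ ηp)
    -- (i) the realized trajectory lies in the image of the perfect data matrices
    (h1 : ∃ gbar : Fin Hc → ℝ,
      UP.mulVec gbar = uini ∧ YP.mulVec gbar = yini ∧
      UF.mulVec gbar = usys ∧ YF.mulVec gbar = ysys)
    -- (ii) ARX relation between past data, future inputs and future outputs
    (h2 : ∀ Δ : Fin Hc → ℝ,
      YF.mulVec Δ =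
        K.mulVec (Fin.append (UP.mulVec Δ) (YP.mulVec Δ)) + T.mulVec (UF.mulVec Δ))
    -- (iii) Λ ⪰ KᵀQK
    (h3 : (Matrix.diagonal
            (Fin.append (fun _ : Fin mTini => lu) (fun _ : Fin pTini => ly))
            - Kᵀ * Q * K).PosSemidef)
    -- (iv) bounded input disturbance
    (h4 : enorm2 (usys - UF.mulVec gs) ≤ ηp)
    -- (v) lower bound on the optimal cost
    (h5 : copt ≥ (UF.mulVec gs) ⬝ᵥ R.mulVec (UF.mulVec gs)
            + (YF.mulVec gs - r) ⬝ᵥ Q.mulVec (YF.mulVec gs - r)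
            + lu * (enorm2 (UP.mulVec gs - uini)) ^ 2
            + ly * (enorm2 (YP.mulVec gs - yini)) ^ 2) :
    2 * Real.sqrt copt
      + ηp * (Real.sqrt 2 * opNorm2 (hR.posSemidef.sqrt * (1 : Matrix (Fin mN) (Fin mN) ℝ))
              + opNorm2 (hQ.sqrt * T))
      ≥ Real.sqrt (usys ⬝ᵥ R.mulVec usys + (ysys - r) ⬝ᵥ Q.mulVec (ysys - r)) := by
  obtain ⟨gbar, hUP, hYP, hUF, hYF⟩ := h1
  set e := usys - UF *ᵥ gs
  set w := Fin.append (uini - UP *ᵥ gs) (yini - YP *ᵥ gs)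
  have hu : usys = UF *ᵥ gs + 1 *ᵥ e := by simp [e]
  have hy : ysys - r = (YF *ᵥ gs - r + K *ᵥ w) + T *ᵥ e := by
    have h := h2 (gbar - gs)
    rw [mulVec_sub YF, mulVec_sub UP, mulVec_sub YP, mulVec_sub UF, hUP, hYP, hUF, hYF] at h
    rw [← sub_add_sub_cancel ysys (YF *ᵥ gs) r, h]
    abel
  have hKw : enorm2 (hQ.sqrt *ᵥ (K *ᵥ w)) ^ 2
      ≤ lu * enorm2 (UP *ᵥ gs - uini) ^ 2 + ly * enorm2 (YP *ᵥ gs - yini) ^ 2 := by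
    simpa only [w, dotProduct_diagonal_append_mulVec, enorm2_sub_comm]
      using sq_enorm2_sqrt_mulVec_le hQ h3 w
  have hcost : enorm2 (hR.posSemidef.sqrt *ᵥ (UF *ᵥ gs)) + enorm2 (hQ.sqrt *ᵥ (YF *ᵥ gs - r))
      + enorm2 (hQ.sqrt *ᵥ (K *ᵥ w)) ≤ 2 * √copt := by
    apply add_add_le_two_mul_sqrt
    rw [hR.posSemidef.dotProduct_mulVec_eq_sq_enorm2_sqrt,
      hQ.dotProduct_mulVec_eq_sq_enorm2_sqrt] at h5
    linarith
  have hX := enorm2_mulVec_add_le hR.posSemidef.sqrt 1 (UF *ᵥ gs) h4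
  have hY := enorm2_mulVec_add_le hQ.sqrt T (YF *ᵥ gs - r + K *ᵥ w) h4
  rw [← hu] at hX
  rw [← hy, mulVec_add] at hY
  grw [enorm2_add_le] at hY
  rw [ge_iff_le, hR.posSemidef.dotProduct_mulVec_eq_sq_enorm2_sqrt,
    hQ.dotProduct_mulVec_eq_sq_enorm2_sqrt]
  have hα : ηp * opNorm2 (hR.posSemidef.sqrt * 1)
      ≤ ηp * (√2 * opNorm2 (hR.posSemidef.sqrt * 1)) := by
    gcongr
    exact le_mul_of_one_le_left (opNorm2_nonneg _) Real.one_lt_sqrt_two.le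
  grw [sqrt_sq_add_sq_le_add (enorm2_nonneg _) (enorm2_nonneg _)]
  linarith

/-- Theorem 1 of the paper: performance guarantee of robust DeePC. -/
theorem robust_deepc_performance_guarantee
    (mN pN mTini pTini Hc : ℕ)
    (R : Matrix (Fin mN) (Fin mN) ℝ) (hR : R.PosDef)
    (Q : Matrix (Fin pN) (Fin pN) ℝ) (hQ : Q.PosSemidef)
    (lu ly : ℝ) (hlu : 0 < lu) (hly : 0 < ly)
    (UP : Matrix (Fin mTini) (Fin Hc) ℝ) (YP : Matrix (Fin pTini) (Fin Hc) ℝ)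
    (UF : Matrix (Fin mN) (Fin Hc) ℝ) (YF : Matrix (Fin pN) (Fin Hc) ℝ)
    (uini : Fin mTini → ℝ) (yini : Fin pTini → ℝ)
    (usys : Fin mN → ℝ) (ysys : Fin pN → ℝ) (r : Fin pN → ℝ)
    (gs : Fin Hc → ℝ)
    (K : Matrix (Fin pN) (Fin (mTini + pTini)) ℝ)
    (T : Matrix (Fin pN) (Fin mN) ℝ)
    (ηp copt : ℝ) (hηp : 0 ≤ ηp) (hcopt0 : 0 ≤ copt)
    -- (i) the realized trajectory lies in the image of the perfect data matrices
    (h1 : ∃ gbar : Fin Hc → ℝ,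
      UP.mulVec gbar = uini ∧ YP.mulVec gbar = yini ∧
      UF.mulVec gbar = usys ∧ YF.mulVec gbar = ysys)
    -- (ii) ARX relation between past data, future inputs and future outputs
    (h2 : ∀ Δ : Fin Hc → ℝ,
      YF.mulVec Δ =
        K.mulVec (Fin.append (UP.mulVec Δ) (YP.mulVec Δ)) + T.mulVec (UF.mulVec Δ))
    -- (iii) Λ ⪰ KᵀQK
    (h3 : (Matrix.diagonal
            (Fin.append (fun _ : Fin mTini => lu) (fun _ : Fin pTini => ly))
            - Kᵀ * Q * K).PosSemidef)
    -- (iv) bounded input disturbance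
    (h4 : enorm2 (usys - UF.mulVec gs) ≤ ηp)
    -- (v) lower bound on the optimal cost
    (h5 : copt ≥ (UF.mulVec gs) ⬝ᵥ R.mulVec (UF.mulVec gs)
            + (YF.mulVec gs - r) ⬝ᵥ Q.mulVec (YF.mulVec gs - r)
            + lu * (enorm2 (UP.mulVec gs - uini)) ^ 2
            + ly * (enorm2 (YP.mulVec gs - yini)) ^ 2) :
    2 * Real.sqrt copt
      + ηp * (Real.sqrt 2 * opNorm2 (hR.posSemidef.sqrt * (1 : Matrix (Fin mN) (Fin mN) ℝ))
              + opNorm2 (hQ.sqrt * T))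
      ≥ Real.sqrt (usys ⬝ᵥ R.mulVec usys + (ysys - r) ⬝ᵥ Q.mulVec (ysys - r)) :=
  robust_deepc_performance_guarantee_general mN pN mTini pTini Hc R hR Q hQ lu ly UP YP UF YF uini
    yini usys ysys r gs K T ηp copt hηp h1 h2 h3 h4 h5
end

section
/- Let R be an mN×mN symmetric positive definite matrix, Q a pN×pN symmetric positive semidefinite matrix, and λ_u, λ_y > 0. Let Ū_P ∈ ℝ^{mT_ini×H_c}, Ȳ_P ∈ ℝ^{pT_ini×H_c}, Ū_F ∈ ℝ^{mN×H_c}, Ȳ_F ∈ ℝ^{pN×H_c} be matrices, and ū_ini, ȳ_ini, u_sys, y_sys, r, g* vectors of compatible dimensions with u_sys = Ū_F g*. Assume: (i) there exists ḡ ∈ ℝ^{H_c} with Ū_P ḡ = ū_ini, Ȳ_P ḡ = ȳ_ini, Ū_F ḡ = u_sys, Ȳ_F ḡ = y_sys; (ii) there exist matrices K and T such that for every Δ ∈ ℝ^{H_c}, Ȳ_F Δ = K·col(Ū_P Δ, Ȳ_P Δ) + T·(Ū_F Δ); (iii) Λ := diag(λ_u I_{mT_ini}, λ_y I_{pT_ini})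 ⪰ KᵀQK; (iv) the scalar c_opt ≥ 0 satisfies c_opt ≥ ‖Ū_F g*‖_R² + ‖Ȳ_F g* − r‖_Q² + λ_u‖Ū_P g* − ū_ini‖² + λ_y‖Ȳ_P g* − ȳ_ini‖². Then 2·c_opt ≥ ‖u_sys‖_R² + ‖y_sys − r‖_Q². -/
/-!
Write `ḡ` for the data vector generating the realized trajectory and `e := col(Ū_P g* − ū_ini,
Ȳ_P g* − ȳ_ini)`. Since `Ū_F (g* − ḡ) = 0`, the ARX relation gives `Ȳ_F g* − y_sys = K e`, so
`y_sys − r = (Ȳ_F g* − r) − K e`. Then `‖a − b‖_Q² ≤ 2‖a‖_Q² + 2‖b‖_Q²` together with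
`‖K e‖_Q² ≤ eᵀ Λ e = λ_u‖e_u‖² + λ_y‖e_y‖²` bounds the realized cost by twice the optimal one.
-/

open Matrix

/-- Euclidean norm of a vector in `ℝ^n`. -/
noncomputable def enormR {n : ℕ} (x : Fin n → ℝ) : ℝ := Real.sqrt (∑ i, x i ^ 2)

lemma enormR_sq {n : ℕ} (x : Fin n → ℝ) : enormR x ^ 2 = ∑ i, x i ^ 2 :=
  Real.sq_sqrt (Finset.sum_nonneg fun _ _ => sq_nonneg _)

namespace Matrix

variable {m n : Type*} [Fintype m] [Fintype n]

theorem dotProduct_mulVec_diagonal_self {R : Type*} [CommSemiring R] [DecidableEq n]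
    (d x : n → R) :
    x ⬝ᵥ diagonal d *ᵥ x = ∑ i, d i * x i ^ 2 := by
  simp only [dotProduct, mulVec_diagonal]
  exact Finset.sum_congr rfl fun i _ => by ring

theorem dotProduct_transpose_mul_mul_mulVec {R : Type*} [CommSemiring R]
    (K : Matrix m n R) (Q : Matrix m m R) (e : n → R) :
    e ⬝ᵥ (Kᵀ * Q * K) *ᵥ e = K *ᵥ e ⬝ᵥ Q *ᵥ (K *ᵥ e) := by
  rw [← mulVec_mulVec, ← mulVec_mulVec, dotProduct_mulVec, ← mulVec_transpose,
    transpose_transpose]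

theorem PosSemidef.dotProduct_mulVec_le_of_sub {Λ M : Matrix n n ℝ} (h : (Λ - M).PosSemidef)
    (x : n → ℝ) : x ⬝ᵥ M *ᵥ x ≤ x ⬝ᵥ Λ *ᵥ x := by
  have := h.dotProduct_mulVec_nonneg x
  rw [star_trivial, sub_mulVec, dotProduct_sub] at this
  linarith

/-- The parallelogram identity `‖a − b‖² + ‖a + b‖² = 2‖a‖² + 2‖b‖²` holds for any quadratic
form; positivity of `‖a + b‖_Q²` turns it into the bound. -/
theorem PosSemidef.dotProduct_mulVec_sub_le {Q : Matrix n n ℝ} (hQ : Q.PosSemidef)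
    (a b : n → ℝ) :
    (a - b) ⬝ᵥ Q *ᵥ (a - b) ≤ 2 * (a ⬝ᵥ Q *ᵥ a) + 2 * (b ⬝ᵥ Q *ᵥ b) := by
  have := hQ.dotProduct_mulVec_nonneg (a + b)
  simp only [star_trivial, mulVec_add, mulVec_sub, dotProduct_add, dotProduct_sub,
    add_dotProduct, sub_dotProduct] at this ⊢
  linarith

end Matrix

theorem append_dotProduct_diagonal_append_mulVec {a b : ℕ} (lu ly : ℝ) (x : Fin a → ℝ)
    (y : Fin b → ℝ) :
    Fin.append x y ⬝ᵥ diagonal (Fin.append (fun _ => lu) (fun _ => ly)) *ᵥ Fin.append x y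
      = lu * enormR x ^ 2 + ly * enormR y ^ 2 := by
  simp only [dotProduct_mulVec_diagonal_self, Fin.sum_univ_add, Fin.append_left,
    Fin.append_right, enormR_sq, Finset.mul_sum]

theorem robust_deepc_performance_guarantee_no_input_disturbance_general
    (mN pN mTini pTini Hc : ℕ)
    (R : Matrix (Fin mN) (Fin mN) ℝ) (hR : R.PosDef)
    (Q : Matrix (Fin pN) (Fin pN) ℝ) (hQ : Q.PosSemidef)
    (lu ly : ℝ)
    (UP : Matrix (Fin mTini) (Fin Hc) ℝ) (YP : Matrix (Fin pTini) (Fin Hc) ℝ)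
    (UF : Matrix (Fin mN) (Fin Hc) ℝ) (YF : Matrix (Fin pN) (Fin Hc) ℝ)
    (uini : Fin mTini → ℝ) (yini : Fin pTini → ℝ)
    (usys : Fin mN → ℝ) (ysys : Fin pN → ℝ) (r : Fin pN → ℝ)
    (gs : Fin Hc → ℝ)
    (K : Matrix (Fin pN) (Fin (mTini + pTini)) ℝ)
    (T : Matrix (Fin pN) (Fin mN) ℝ)
    (copt : ℝ)
    -- no input disturbance: the realized input equals the planned input
    (husys : usys = UF.mulVec gs)
    -- (i) the realized trajectory lies in the image of the perfect data matrices
    (h1 : ∃ gbar : Fin Hc → ℝ,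
      UP.mulVec gbar = uini ∧ YP.mulVec gbar = yini ∧
      UF.mulVec gbar = usys ∧ YF.mulVec gbar = ysys)
    -- (ii) ARX relation between past data, future inputs and future outputs
    (h2 : ∀ Δ : Fin Hc → ℝ,
      YF.mulVec Δ =
        K.mulVec (Fin.append (UP.mulVec Δ) (YP.mulVec Δ)) + T.mulVec (UF.mulVec Δ))
    -- (iii) Λ ⪰ KᵀQK
    (h3 : (Matrix.diagonal
            (Fin.append (fun _ : Fin mTini => lu) (fun _ : Fin pTini => ly))
            - Kᵀ * Q * K).PosSemidef)
    -- (iv) lower bound on the optimal cost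
    (h4 : copt ≥ (UF.mulVec gs) ⬝ᵥ R.mulVec (UF.mulVec gs)
            + (YF.mulVec gs - r) ⬝ᵥ Q.mulVec (YF.mulVec gs - r)
            + lu * (enormR (UP.mulVec gs - uini)) ^ 2
            + ly * (enormR (YP.mulVec gs - yini)) ^ 2) :
    2 * copt ≥ usys ⬝ᵥ R.mulVec usys + (ysys - r) ⬝ᵥ Q.mulVec (ysys - r) := by
  obtain ⟨gbar, hup, hyp, huf, hyf⟩ := h1
  set e := Fin.append (UP *ᵥ gs - uini) (YP *ᵥ gs - yini)
  have hdev : YF *ᵥ gs - ysys = K *ᵥ e := by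
    simpa [mulVec_sub, hup, hyp, huf, hyf, husys] using h2 (gs - gbar)
  have hy : ysys - r = (YF *ᵥ gs - r) - K *ᵥ e := by rw [← hdev]; abel
  have hKe : K *ᵥ e ⬝ᵥ Q *ᵥ (K *ᵥ e)
      ≤ lu * enormR (UP *ᵥ gs - uini) ^ 2 + ly * enormR (YP *ᵥ gs - yini) ^ 2 := by
    rw [← dotProduct_transpose_mul_mul_mulVec, ← append_dotProduct_diagonal_append_mulVec]
    exact h3.dotProduct_mulVec_le_of_sub e
  have hRnn := hR.posSemidef.dotProduct_mulVec_nonneg (UF *ᵥ gs)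
  have hQsub := hQ.dotProduct_mulVec_sub_le (YF *ᵥ gs - r) (K *ᵥ e)
  rw [star_trivial] at hRnn
  rw [hy, husys]
  linarith

/-- Corollary 1 of the paper: performance guarantee of robust DeePC in the absence of
input disturbance. -/
theorem robust_deepc_performance_guarantee_no_input_disturbance
    (mN pN mTini pTini Hc : ℕ)
    (R : Matrix (Fin mN) (Fin mN) ℝ) (hR : R.PosDef)
    (Q : Matrix (Fin pN) (Fin pN) ℝ) (hQ : Q.PosSemidef)
    (lu ly : ℝ) (hlu : 0 < lu) (hly : 0 < ly)
    (UP : Matrix (Fin mTini) (Fin Hc) ℝ) (YP : Matrix (Fin pTini) (Fin Hc) ℝ)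
    (UF : Matrix (Fin mN) (Fin Hc) ℝ) (YF : Matrix (Fin pN) (Fin Hc) ℝ)
    (uini : Fin mTini → ℝ) (yini : Fin pTini → ℝ)
    (usys : Fin mN → ℝ) (ysys : Fin pN → ℝ) (r : Fin pN → ℝ)
    (gs : Fin Hc → ℝ)
    (K : Matrix (Fin pN) (Fin (mTini + pTini)) ℝ)
    (T : Matrix (Fin pN) (Fin mN) ℝ)
    (copt : ℝ) (hcopt0 : 0 ≤ copt)
    -- no input disturbance: the realized input equals the planned input
    (husys : usys = UF.mulVec gs)
    -- (i) the realized trajectory lies in the image of the perfect data matrices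
    (h1 : ∃ gbar : Fin Hc → ℝ,
      UP.mulVec gbar = uini ∧ YP.mulVec gbar = yini ∧
      UF.mulVec gbar = usys ∧ YF.mulVec gbar = ysys)
    -- (ii) ARX relation between past data, future inputs and future outputs
    (h2 : ∀ Δ : Fin Hc → ℝ,
      YF.mulVec Δ =
        K.mulVec (Fin.append (UP.mulVec Δ) (YP.mulVec Δ)) + T.mulVec (UF.mulVec Δ))
    -- (iii) Λ ⪰ KᵀQK
    (h3 : (Matrix.diagonal
            (Fin.append (fun _ : Fin mTini => lu) (fun _ : Fin pTini => ly))
            - Kᵀ * Q * K).PosSemidef)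
    -- (iv) lower bound on the optimal cost
    (h4 : copt ≥ (UF.mulVec gs) ⬝ᵥ R.mulVec (UF.mulVec gs)
            + (YF.mulVec gs - r) ⬝ᵥ Q.mulVec (YF.mulVec gs - r)
            + lu * (enormR (UP.mulVec gs - uini)) ^ 2
            + ly * (enormR (YP.mulVec gs - yini)) ^ 2) :
    2 * copt ≥ usys ⬝ᵥ R.mulVec usys + (ysys - r) ⬝ᵥ Q.mulVec (ysys - r) :=
  robust_deepc_performance_guarantee_no_input_disturbance_general mN pN mTini pTini Hc R hR Q hQ lu
    ly UP YP UF YF uini yini usys ysys r gs K T copt husys h1 h2 h3 h4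
end

section
/- Let R be an mN×mN symmetric positive definite matrix, Q a pN×pN symmetric positive semidefinite matrix, and λ_u, λ_y > 0. Let Ū_P, Ȳ_P, Ū_F, Ȳ_F be matrices and ū_ini, ȳ_ini, u_sys, y_sys, r, g* vectors of compatible dimensions, and set ε := u_sys − Ū_F g*. Assume: (i) there exists ḡ with Ū_P ḡ = ū_ini, Ȳ_P ḡ = ȳ_ini, Ū_F ḡ = u_sys, Ȳ_F ḡ = y_sys; (ii) there exist matrices K and T such that for every Δ ∈ ℝ^{H_c}, Ȳ_F Δ = K·col(Ū_P Δ, Ȳ_P Δ) + T·(Ū_F Δ); (iii) Λ := diag(λ_u I_{mT_ini}, λ_y I_{pT_ini}) ⪰ KᵀQK; (iv) the scalar c_opt satisfies c_opt ≥ ‖Ū_F g*‖_R² + ‖Ȳ_F g* − r‖_Q² + λ_u‖Ū_P g* − ū_ini‖² + λ_y‖Ȳ_P g* − ȳ_ini‖². Then c_opt ≥ ‖u_sys − ε‖_R² + (1/2)·‖y_sys − r − Tε‖_Q². -/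
/-! The increment `Δ = ḡ - g*` between a representation `ḡ` of the realized trajectory and the
optimizer `g*` satisfies the ARX relation, which splits the output error as
`y_sys - r - Tε = (Ȳ_F g* - r) + K w`, where `w` stacks the past mismatches `ū_ini - Ū_P g*` and
`ȳ_ini - Ȳ_P g*`. The parallelogram bound `‖a + b‖_Q² ≤ 2‖a‖_Q² + 2‖b‖_Q²` and `KᵀQK ⪯ Λ` then
bound half the output error by the tracking cost plus the regularization `‖w‖_Λ²`. -/

open Matrix

/-- Euclidean norm of a vector in `ℝ^n`. -/
noncomputable def euclidNorm {n : ℕ} (x : Fin n → ℝ) : ℝ := Real.sqrt (∑ i, x i ^ 2)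

section QuadraticForm

variable {n m : Type*} [Fintype n] [Fintype m]

theorem Matrix.PosSemidef.dotProduct_mulVec_add_le {Q : Matrix n n ℝ} (hQ : Q.PosSemidef)
    (a b : n → ℝ) :
    (a + b) ⬝ᵥ Q *ᵥ (a + b) ≤ 2 * (a ⬝ᵥ Q *ᵥ a) + 2 * (b ⬝ᵥ Q *ᵥ b) := by
  have h := hQ.dotProduct_mulVec_nonneg (a - b)
  simp only [star_trivial, mulVec_sub, mulVec_add, dotProduct_sub, dotProduct_add,
    sub_dotProduct, add_dotProduct] at h ⊢
  linarith

theorem Matrix.PosSemidef.dotProduct_mulVec_le_of_sub_s2 {A B : Matrix n n ℝ}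
    (h : (A - B).PosSemidef) (x : n → ℝ) : x ⬝ᵥ B *ᵥ x ≤ x ⬝ᵥ A *ᵥ x := by
  have hx := h.dotProduct_mulVec_nonneg x
  rw [star_trivial, sub_mulVec, dotProduct_sub] at hx
  linarith

theorem Matrix.mulVec_dotProduct_mulVec_mulVec {R : Type*} [CommSemiring R]
    (K : Matrix m n R) (Q : Matrix m m R) (z : n → R) :
    K *ᵥ z ⬝ᵥ Q *ᵥ (K *ᵥ z) = z ⬝ᵥ (Kᵀ * Q * K) *ᵥ z := by
  rw [← mulVec_mulVec, ← mulVec_mulVec, dotProduct_mulVec z, vecMul_transpose]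

end QuadraticForm

theorem euclidNorm_sq {n : ℕ} (x : Fin n → ℝ) : euclidNorm x ^ 2 = x ⬝ᵥ x := by
  rw [euclidNorm, Real.sq_sqrt (Finset.sum_nonneg fun i _ => sq_nonneg _), dotProduct]
  simp only [sq]

theorem euclidNorm_sub_comm {n : ℕ} (x y : Fin n → ℝ) :
    euclidNorm (x - y) = euclidNorm (y - x) := by
  rw [← neg_sub, euclidNorm, euclidNorm]
  simp only [Pi.neg_apply, neg_sq]

theorem append_dotProduct_diagonal_append {k l : ℕ} (a b : ℝ) (x : Fin k → ℝ) (y : Fin l → ℝ) :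
    Fin.append x y ⬝ᵥ diagonal (Fin.append (fun _ => a) (fun _ => b)) *ᵥ Fin.append x y
      = a * euclidNorm x ^ 2 + b * euclidNorm y ^ 2 := by
  simp only [euclidNorm_sq, dotProduct, Fin.sum_univ_add, mulVec_diagonal, Fin.append_left,
    Fin.append_right, Finset.mul_sum]
  congr 1 <;> exact Finset.sum_congr rfl fun i _ => by ring

theorem robust_deepc_key_inequality_general
    (mN pN mTini pTini Hc : ℕ)
    (R : Matrix (Fin mN) (Fin mN) ℝ)
    (Q : Matrix (Fin pN) (Fin pN) ℝ) (hQ : Q.PosSemidef)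
    (lu ly : ℝ)
    (UP : Matrix (Fin mTini) (Fin Hc) ℝ) (YP : Matrix (Fin pTini) (Fin Hc) ℝ)
    (UF : Matrix (Fin mN) (Fin Hc) ℝ) (YF : Matrix (Fin pN) (Fin Hc) ℝ)
    (uini : Fin mTini → ℝ) (yini : Fin pTini → ℝ)
    (usys : Fin mN → ℝ) (ysys : Fin pN → ℝ) (r : Fin pN → ℝ)
    (gs : Fin Hc → ℝ)
    (K : Matrix (Fin pN) (Fin (mTini + pTini)) ℝ)
    (T : Matrix (Fin pN) (Fin mN) ℝ)
    (copt : ℝ)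
    (ε : Fin mN → ℝ) (hε : ε = usys - UF.mulVec gs)
    -- (i) the realized trajectory lies in the image of the perfect data matrices
    (h1 : ∃ gbar : Fin Hc → ℝ,
      UP.mulVec gbar = uini ∧ YP.mulVec gbar = yini ∧
      UF.mulVec gbar = usys ∧ YF.mulVec gbar = ysys)
    -- (ii) ARX relation between past data, future inputs and future outputs
    (h2 : ∀ Δ : Fin Hc → ℝ,
      YF.mulVec Δ =
        K.mulVec (Fin.append (UP.mulVec Δ) (YP.mulVec Δ)) + T.mulVec (UF.mulVec Δ))
    -- (iii) Λ ⪰ KᵀQK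
    (h3 : (Matrix.diagonal
            (Fin.append (fun _ : Fin mTini => lu) (fun _ : Fin pTini => ly))
            - Kᵀ * Q * K).PosSemidef)
    -- (iv) lower bound on the optimal cost
    (h4 : copt ≥ (UF.mulVec gs) ⬝ᵥ R.mulVec (UF.mulVec gs)
            + (YF.mulVec gs - r) ⬝ᵥ Q.mulVec (YF.mulVec gs - r)
            + lu * (euclidNorm (UP.mulVec gs - uini)) ^ 2
            + ly * (euclidNorm (YP.mulVec gs - yini)) ^ 2) :
    copt ≥ (usys - ε) ⬝ᵥ R.mulVec (usys - ε)
      + (1 / 2) * ((ysys - r - T.mulVec ε) ⬝ᵥ Q.mulVec (ysys - r - T.mulVec ε)) := by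
  obtain ⟨gbar, hUP, hYP, hUF, hYF⟩ := h1
  set w := Fin.append (uini - UP *ᵥ gs) (yini - YP *ᵥ gs)
  have harx := h2 (gbar - gs)
  simp only [mulVec_sub, hUP, hYP, hUF, hYF, ← hε] at harx
  have hsplit : ysys - r - T *ᵥ ε = (YF *ᵥ gs - r) + K *ᵥ w := by
    rw [sub_eq_iff_eq_add.mp harx]; abel
  have hreg : K *ᵥ w ⬝ᵥ Q *ᵥ (K *ᵥ w)
      ≤ lu * euclidNorm (UP *ᵥ gs - uini) ^ 2 + ly * euclidNorm (YP *ᵥ gs - yini) ^ 2 := by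
    rw [mulVec_dotProduct_mulVec_mulVec, euclidNorm_sub_comm (UP *ᵥ gs),
      euclidNorm_sub_comm (YP *ᵥ gs), ← append_dotProduct_diagonal_append]
    exact h3.dotProduct_mulVec_le_of_sub_s2 w
  have hout := hQ.dotProduct_mulVec_add_le (YF *ᵥ gs - r) (K *ᵥ w)
  rw [hε, sub_sub_cancel, ← hε, hsplit]
  linarith

/-- The key intermediate inequality (eq. (12)) in the proof of Theorem 1 of the paper. -/
theorem robust_deepc_key_inequality
    (mN pN mTini pTini Hc : ℕ)
    (R : Matrix (Fin mN) (Fin mN) ℝ) (hR : R.PosDef)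
    (Q : Matrix (Fin pN) (Fin pN) ℝ) (hQ : Q.PosSemidef)
    (lu ly : ℝ) (hlu : 0 < lu) (hly : 0 < ly)
    (UP : Matrix (Fin mTini) (Fin Hc) ℝ) (YP : Matrix (Fin pTini) (Fin Hc) ℝ)
    (UF : Matrix (Fin mN) (Fin Hc) ℝ) (YF : Matrix (Fin pN) (Fin Hc) ℝ)
    (uini : Fin mTini → ℝ) (yini : Fin pTini → ℝ)
    (usys : Fin mN → ℝ) (ysys : Fin pN → ℝ) (r : Fin pN → ℝ)
    (gs : Fin Hc → ℝ)
    (K : Matrix (Fin pN) (Fin (mTini + pTini)) ℝ)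
    (T : Matrix (Fin pN) (Fin mN) ℝ)
    (copt : ℝ)
    (ε : Fin mN → ℝ) (hε : ε = usys - UF.mulVec gs)
    -- (i) the realized trajectory lies in the image of the perfect data matrices
    (h1 : ∃ gbar : Fin Hc → ℝ,
      UP.mulVec gbar = uini ∧ YP.mulVec gbar = yini ∧
      UF.mulVec gbar = usys ∧ YF.mulVec gbar = ysys)
    -- (ii) ARX relation between past data, future inputs and future outputs
    (h2 : ∀ Δ : Fin Hc → ℝ,
      YF.mulVec Δ =
        K.mulVec (Fin.append (UP.mulVec Δ) (YP.mulVec Δ)) + T.mulVec (UF.mulVec Δ))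
    -- (iii) Λ ⪰ KᵀQK
    (h3 : (Matrix.diagonal
            (Fin.append (fun _ : Fin mTini => lu) (fun _ : Fin pTini => ly))
            - Kᵀ * Q * K).PosSemidef)
    -- (iv) lower bound on the optimal cost
    (h4 : copt ≥ (UF.mulVec gs) ⬝ᵥ R.mulVec (UF.mulVec gs)
            + (YF.mulVec gs - r) ⬝ᵥ Q.mulVec (YF.mulVec gs - r)
            + lu * (euclidNorm (UP.mulVec gs - uini)) ^ 2
            + ly * (euclidNorm (YP.mulVec gs - yini)) ^ 2) :
    copt ≥ (usys - ε) ⬝ᵥ R.mulVec (usys - ε)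
      + (1 / 2) * ((ysys - r - T.mulVec ε) ⬝ᵥ Q.mulVec (ysys - r - T.mulVec ε)) :=
  robust_deepc_key_inequality_general mN pN mTini pTini Hc R Q hQ lu ly UP YP UF YF uini yini usys
    ysys r gs K T copt ε hε h1 h2 h3 h4
end

section
/- Let A ∈ ℝ^{m×n}, b ∈ ℝ^m, g ∈ ℝ^n, let Ā ∈ ℝ^{m×n} and b̄ ∈ ℝ^m have nonnegative entries, and define the interval uncertainty set 𝒟_int := { (ΔA, Δb) : |ΔA_{ij}| ≤ Ā_{ij} for all (i,j), |Δb_i| ≤ b̄_i for all i }. Then sup_{(ΔA,Δb) ∈ 𝒟_int} ‖(A + ΔA)g − (b + Δb)‖ = ‖v‖, where v ∈ ℝ^m is the vector with entries v_i = |(Ag − b)_i| + b̄_i + Σ_{j=1}^{n} Ā_{ij}·|g_j|, and this supremum is attained. -/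
open Matrix

/-- Euclidean norm of a vector in `ℝ^n`. -/
noncomputable def vecEnorm {n : ℕ} (x : Fin n → ℝ) : ℝ := Real.sqrt (∑ i, x i ^ 2)

/-!
Each entry of the residual is `(Ag − b)_i + Σ_j ΔA_{ij} g_j − Δb_i`, whose absolute value is at
most `v_i` by the triangle inequality, and the Euclidean norm is monotone in the absolute values
of the entries. Equality holds for `ΔA_{ij} = ε_i Ā_{ij} δ_j` and `Δb_i = −ε_i b̄_i`, where the
signs `ε_i, δ_j ∈ {±1}` satisfy `ε_i (Ag − b)_i = |(Ag − b)_i|` and `δ_j g_j = |g_j|`: then every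
entry equals `ε_i v_i`.
-/

theorem vecEnorm_le_of_abs_le {n : ℕ} {x y : Fin n → ℝ} (h : ∀ i, |x i| ≤ |y i|) :
    vecEnorm x ≤ vecEnorm y :=
  Real.sqrt_le_sqrt (Finset.sum_le_sum fun i _ => sq_le_sq.2 (h i))

theorem vecEnorm_eq_of_abs_eq {n : ℕ} {x y : Fin n → ℝ} (h : ∀ i, |x i| = |y i|) :
    vecEnorm x = vecEnorm y :=
  le_antisymm (vecEnorm_le_of_abs_le fun i => (h i).le)
    (vecEnorm_le_of_abs_le fun i => (h i).ge)

section

variable {R : Type*} [Ring R] [LinearOrder R]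

theorem exists_abs_eq_one_mul_eq_abs [IsStrictOrderedRing R] (x : R) :
    ∃ ε : R, |ε| = 1 ∧ ε * x = |x| := by
  rcases abs_choice x with h | h
  · exact ⟨1, abs_one, by rw [one_mul, h]⟩
  · exact ⟨-1, by rw [abs_neg, abs_one], by rw [neg_one_mul, h]⟩

theorem eq_mul_abs_of_mul_eq_abs {ε x : R} (hε : |ε| = 1) (hx : ε * x = |x|) : x = ε * |x| := by
  rw [← hx, ← mul_assoc, ← abs_mul_abs_self, hε, one_mul, one_mul]

variable {ι κ : Type*} [Fintype κ]

theorem abs_mulVec_apply_le [IsStrictOrderedRing R] {M N : Matrix ι κ R}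
    (h : ∀ i j, |M i j| ≤ N i j) (g : κ → R) (i : ι) : |(M *ᵥ g) i| ≤ ∑ j, N i j * |g j| :=
  calc |(M *ᵥ g) i| ≤ ∑ j, |M i j * g j| := Finset.abs_sum_le_sum_abs _ _
    _ ≤ ∑ j, N i j * |g j| := Finset.sum_le_sum fun j _ => by
        rw [abs_mul]
        exact mul_le_mul_of_nonneg_right (h i j) (abs_nonneg _)

theorem signed_mulVec_apply (ε : ι → R) (N : Matrix ι κ R) {δ g : κ → R}
    (hδ : ∀ j, δ j * g j = |g j|) (i : ι) :
    (of (fun i j => ε i * N i j * δ j) *ᵥ g) i = ε i * ∑ j, N i j * |g j| := by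
  rw [Finset.mul_sum]
  refine Finset.sum_congr rfl fun j _ => ?_
  simp only [of_apply, ← hδ j, mul_assoc]

end

theorem perturbed_residual {R ι κ : Type*} [Ring R] [Fintype κ] (A ΔA : Matrix ι κ R)
    (b Δb : ι → R) (g : κ → R) : (A + ΔA) *ᵥ g - (b + Δb) = (A *ᵥ g - b) + ΔA *ᵥ g - Δb := by
  rw [add_mulVec]
  abel

/-- Worst-case evaluation underlying Proposition 3 of the paper: interval uncertainties.
The supremum equals `‖v‖` with `v_i = |(Ag − b)_i| + b̄_i + Σ_j Ā_{ij}|g_j|`, and is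
attained. -/
theorem worst_case_interval
    (m n : ℕ) (A : Matrix (Fin m) (Fin n) ℝ) (b : Fin m → ℝ) (g : Fin n → ℝ)
    (Abar : Matrix (Fin m) (Fin n) ℝ) (hAbar : ∀ i j, 0 ≤ Abar i j)
    (bbar : Fin m → ℝ) (hbbar : ∀ i, 0 ≤ bbar i) :
    IsGreatest
      {c | ∃ (ΔA : Matrix (Fin m) (Fin n) ℝ) (Δb : Fin m → ℝ),
        (∀ i j, |ΔA i j| ≤ Abar i j) ∧ (∀ i, |Δb i| ≤ bbar i) ∧
        c = vecEnorm ((A + ΔA).mulVec g - (b + Δb))}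
      (vecEnorm (fun i => |(A.mulVec g - b) i| + bbar i + ∑ j, Abar i j * |g j|)) := by
  set r := A *ᵥ g - b with hr_def
  have hv : ∀ i, 0 ≤ |r i| + bbar i + ∑ j, Abar i j * |g j| := fun i => by
    have := Finset.sum_nonneg fun j (_ : j ∈ Finset.univ) =>
      mul_nonneg (hAbar i j) (abs_nonneg (g j))
    linarith [abs_nonneg (r i), hbbar i]
  constructor
  · choose ε hε using fun i => exists_abs_eq_one_mul_eq_abs (r i)
    choose δ hδ using fun j => exists_abs_eq_one_mul_eq_abs (g j)
    refine ⟨of fun i j => ε i * Abar i j * δ j, fun i => -(ε i * bbar i), fun i j => ?_,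
      fun i => ?_, (vecEnorm_eq_of_abs_eq fun i => ?_).symm⟩
    · simp [abs_mul, (hε i).1, (hδ j).1, abs_of_nonneg (hAbar i j)]
    · simp [abs_mul, (hε i).1, abs_of_nonneg (hbbar i)]
    · have hr := eq_mul_abs_of_mul_eq_abs (hε i).1 (hε i).2
      calc _ = |ε i * (|r i| + bbar i + ∑ j, Abar i j * |g j|)| := by
            rw [perturbed_residual, ← hr_def, Pi.sub_apply, Pi.add_apply,
              signed_mulVec_apply _ _ fun j => (hδ j).2]
            congr 1
            nth_rewrite 1 [hr]
            ring
        _ = _ := by rw [abs_mul, (hε i).1, one_mul]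
  · rintro _ ⟨ΔA, Δb, hA, hb, rfl⟩
    refine vecEnorm_le_of_abs_le fun i => ?_
    rw [perturbed_residual, ← hr_def, Pi.sub_apply, Pi.add_apply, abs_of_nonneg (hv i)]
    linarith [abs_sub (r i + (ΔA *ᵥ g) i) (Δb i), abs_add_le (r i) ((ΔA *ᵥ g) i),
      abs_mulVec_apply_le hA g i, hb i]
end

section
/- Let A ∈ ℝ^{m×n}, b ∈ ℝ^m, let Ā ∈ ℝ^{m×n} and b̄ ∈ ℝ^m have nonnegative entries, and let 𝒢 ⊆ ℝ^n be nonempty. Define 𝒟_int := { (ΔA, Δb) : |ΔA_{ij}| ≤ Ā_{ij} for all (i,j), |Δb_i| ≤ b̄_i for all i } and W(g) := sup_{(ΔA,Δb) ∈ 𝒟_int} ‖(A + ΔA)g − (b + Δb)‖². Then: (a) inf_{g ∈ 𝒢} W(g) equals the infimum of ‖γ + b̄ + Āν‖² over all triples (g, γ, ν) with g ∈ 𝒢, γ ∈ ℝ^m, ν ∈ ℝ^n satisfying −γ ≤ Ag − b ≤ γ (entrywise) and −ν ≤ g ≤ ν (entrywise); and (b) g* ∈ 𝒢 attains inf_{g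 ∈ 𝒢} W(g) if and only if there exist (γ*, ν*) such that (g*, γ*, ν*) attains the latter infimum, in which case inf_{g ∈ 𝒢} W(g) = ‖γ* + b̄ + Āν*‖². -/
open Matrix

/-- Euclidean norm of a vector in `ℝ^n`. -/
noncomputable def enorm {n : ℕ} (x : Fin n → ℝ) : ℝ := Real.sqrt (∑ i, x i ^ 2)

/-!
For a fixed `g`, the residual `(A + ΔA) g - (b + Δb)` has `i`-th entry of absolute value at most
`|Ag - b|ᵢ + b̄ᵢ + (Ā|g|)ᵢ`, and all these bounds are attained at once by the perturbation that
aligns the signs of `ΔA` and `Δb` with those of `g` and `Ag - b`. Hence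
`W g = ‖|Ag - b| + b̄ + Ā|g|‖²`. The quadratic objective is monotone in `γ` and `ν`, whose
feasible values dominate `|Ag - b|` and `|g|` entrywise, so minimizing it over `(γ, ν)` for fixed
`g` returns exactly `W g`; minimizing jointly or in two stages gives the same value and the same
minimizers `g`.
-/

lemma Real.sInf_eq_of_subset_of_forall_exists_le {s t : Set ℝ} (hst : s ⊆ t)
    (h : ∀ y ∈ t, ∃ x ∈ s, x ≤ y) : sInf s = sInf t := by
  -- if `s` is unbounded below then so is `t`, and both infima are the junk value `0`
  by_cases hs : BddBelow s
  · obtain rfl | hne := s.eq_empty_or_nonempty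
    · obtain rfl : t = ∅ := by simpa [Set.eq_empty_iff_forall_notMem] using h
      rfl
    refine le_antisymm (le_csInf (hne.mono hst) fun y hy => ?_) (csInf_le_csInf ?_ hne hst)
    · obtain ⟨x, hx, hxy⟩ := h y hy
      exact csInf_le_of_le hs hx hxy
    · obtain ⟨c, hc⟩ := hs
      refine ⟨c, fun y hy => ?_⟩
      obtain ⟨x, hx, hxy⟩ := h y hy
      exact (hc hx).trans hxy
  · rw [Real.sInf_of_not_bddBelow hs, Real.sInf_of_not_bddBelow fun ht => hs (ht.mono hst)]

section PartialMinimization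

variable {α β : Type*} {F : α × β → ℝ} {S : Set α} {T : Set (α × β)} {φ : α → β}

theorem sInf_image_eq_of_partial_min (hT : ∀ t ∈ T, t.1 ∈ S) (hφ : ∀ x ∈ S, (x, φ x) ∈ T)
    (hmin : ∀ t ∈ T, F (t.1, φ t.1) ≤ F t) :
    sInf ((fun x => F (x, φ x)) '' S) = sInf (F '' T) := by
  refine Real.sInf_eq_of_subset_of_forall_exists_le ?_ ?_
  · rintro _ ⟨x, hx, rfl⟩
    exact ⟨_, hφ x hx, rfl⟩
  · rintro _ ⟨t, ht, rfl⟩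
    exact ⟨_, ⟨t.1, hT t ht, rfl⟩, hmin t ht⟩

theorem isMinOn_partial_min_iff (hT : ∀ t ∈ T, t.1 ∈ S) (hφ : ∀ x ∈ S, (x, φ x) ∈ T)
    (hmin : ∀ t ∈ T, F (t.1, φ t.1) ≤ F t) {x₀ : α} (hx₀ : x₀ ∈ S) :
    IsMinOn (fun x => F (x, φ x)) S x₀ ↔ ∃ y, (x₀, y) ∈ T ∧ IsMinOn F T (x₀, y) := by
  simp only [isMinOn_iff]
  constructor
  · intro h
    exact ⟨φ x₀, hφ x₀ hx₀, fun t ht => (h t.1 (hT t ht)).trans (hmin t ht)⟩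
  · rintro ⟨y, hy, hy_min⟩ x hx
    exact (hmin _ hy).trans (hy_min _ (hφ x hx))

end PartialMinimization

/-- Unlike `SignType.sign`, this is `±1` even at `0`, so that `|a + unitSign a * c| = |a| + c`. -/
noncomputable def unitSign (a : ℝ) : ℝ := if 0 ≤ a then 1 else -1

lemma abs_unitSign (a : ℝ) : |unitSign a| = 1 := by
  unfold unitSign; split_ifs <;> simp

lemma unitSign_mul_self (a : ℝ) : unitSign a * a = |a| := by
  unfold unitSign
  split_ifs with h
  · rw [one_mul, abs_of_nonneg h]
  · rw [abs_of_neg (not_le.1 h), neg_one_mul]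

lemma abs_add_unitSign_mul (a : ℝ) {c : ℝ} (hc : 0 ≤ c) : |a + unitSign a * c| = |a| + c := by
  unfold unitSign
  split_ifs with h
  · rw [one_mul, abs_of_nonneg h, abs_of_nonneg (add_nonneg h hc)]
  · rw [abs_of_neg (not_le.1 h), abs_of_nonpos (by linarith)]
    ring

lemma enorm_sq_eq_sum {n : ℕ} (x : Fin n → ℝ) : _root_.enorm x ^ 2 = ∑ i, x i ^ 2 :=
  Real.sq_sqrt (Finset.sum_nonneg fun _ _ => sq_nonneg _)

lemma enorm_abs {n : ℕ} (x : Fin n → ℝ) : _root_.enorm |x| = _root_.enorm x := by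
  simp only [_root_.enorm, Pi.abs_apply, sq_abs]

lemma enorm_sq_le_enorm_sq_of_abs_le {n : ℕ} {x y : Fin n → ℝ} (h : ∀ i, |x i| ≤ y i) :
    _root_.enorm x ^ 2 ≤ _root_.enorm y ^ 2 := by
  rw [enorm_sq_eq_sum, enorm_sq_eq_sum]
  exact Finset.sum_le_sum fun i _ => sq_le_sq.2 ((h i).trans (le_abs_self _))

lemma abs_mulVec_apply_le_s10 {m n : Type*} [Fintype n] {M Mbar : Matrix m n ℝ}
    (hM : ∀ i j, |M i j| ≤ Mbar i j) (v : n → ℝ) (i : m) : |(M *ᵥ v) i| ≤ (Mbar *ᵥ |v|) i := by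
  refine (Finset.abs_sum_le_sum_abs _ _).trans (Finset.sum_le_sum fun j _ => ?_)
  rw [abs_mul]
  exact mul_le_mul_of_nonneg_right (hM i j) (abs_nonneg _)

lemma mulVec_abs_nonneg {m n : Type*} [Fintype n] {M : Matrix m n ℝ} (hM : ∀ i j, 0 ≤ M i j)
    (v : n → ℝ) : 0 ≤ M *ᵥ |v| :=
  fun i => dotProduct_nonneg_of_nonneg (hM i) fun j => abs_nonneg (v j)

section IntervalUncertainty

variable {m n : ℕ} (A : Matrix (Fin m) (Fin n) ℝ) (b : Fin m → ℝ) {Abar : Matrix (Fin m) (Fin n) ℝ}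
  {bbar : Fin m → ℝ}

lemma perturbed_residual_apply (ΔA : Matrix (Fin m) (Fin n) ℝ) (Δb : Fin m → ℝ) (g : Fin n → ℝ)
    (i : Fin m) :
    ((A + ΔA) *ᵥ g - (b + Δb)) i = (A *ᵥ g - b) i + ((ΔA *ᵥ g) i - Δb i) := by
  simp only [add_mulVec, Pi.sub_apply, Pi.add_apply]
  ring

lemma abs_perturbed_residual_le {ΔA : Matrix (Fin m) (Fin n) ℝ} {Δb : Fin m → ℝ}
    (hΔA : ∀ i j, |ΔA i j| ≤ Abar i j) (hΔb : ∀ i, |Δb i| ≤ bbar i) (g : Fin n → ℝ) (i : Fin m) :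
    |((A + ΔA) *ᵥ g - (b + Δb)) i| ≤ (|A *ᵥ g - b| + bbar + Abar *ᵥ |g|) i := by
  rw [perturbed_residual_apply, Pi.add_apply, Pi.add_apply, Pi.abs_apply]
  linarith [abs_add_le ((A *ᵥ g - b) i) ((ΔA *ᵥ g) i - Δb i), abs_sub ((ΔA *ᵥ g) i) (Δb i),
    abs_mulVec_apply_le_s10 hΔA g i, hΔb i]

theorem isGreatest_perturbed_residual_sq (hAbar : ∀ i j, 0 ≤ Abar i j) (hbbar : ∀ i, 0 ≤ bbar i)
    (g : Fin n → ℝ) :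
    IsGreatest {c | ∃ (ΔA : Matrix (Fin m) (Fin n) ℝ) (Δb : Fin m → ℝ),
        (∀ i j, |ΔA i j| ≤ Abar i j) ∧ (∀ i, |Δb i| ≤ bbar i) ∧
        c = (_root_.enorm ((A + ΔA).mulVec g - (b + Δb))) ^ 2}
      (_root_.enorm (|A *ᵥ g - b| + bbar + Abar *ᵥ |g|) ^ 2) := by
  set r := A *ᵥ g - b
  refine ⟨⟨of fun i j => unitSign (r i) * unitSign (g j) * Abar i j,
    fun i => -(unitSign (r i) * bbar i), fun i j => ?_, fun i => ?_, ?_⟩, ?_⟩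
  · simp [abs_mul, abs_unitSign, abs_of_nonneg (hAbar i j)]
  · simp [abs_mul, abs_unitSign, abs_of_nonneg (hbbar i)]
  · have hΔA : (of fun i j => unitSign (r i) * unitSign (g j) * Abar i j) *ᵥ g
        = fun i => unitSign (r i) * (Abar *ᵥ |g|) i := by
      funext i
      simp only [mulVec, dotProduct, of_apply, Pi.abs_apply, Finset.mul_sum,
        ← unitSign_mul_self (g _)]
      exact Finset.sum_congr rfl fun j _ => by ring
    have h_nonneg : 0 ≤ Abar *ᵥ |g| + bbar := add_nonneg (mulVec_abs_nonneg hAbar g) hbbar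
    conv_rhs => rw [← enorm_abs]
    congr 2
    funext i
    rw [Pi.abs_apply, perturbed_residual_apply, hΔA, ← mul_neg, ← mul_sub, sub_neg_eq_add]
    refine ((abs_add_unitSign_mul (r i) (h_nonneg i)).trans ?_).symm
    simp only [Pi.add_apply, Pi.abs_apply]
    ring
  · rintro _ ⟨ΔA, Δb, hΔA, hΔb, rfl⟩
    exact enorm_sq_le_enorm_sq_of_abs_le (abs_perturbed_residual_le A b hΔA hΔb g)

lemma enorm_sq_abs_residual_le_of_feasible (hAbar : ∀ i j, 0 ≤ Abar i j) (hbbar : ∀ i, 0 ≤ bbar i)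
    {g : Fin n → ℝ} {γ : Fin m → ℝ} {ν : Fin n → ℝ}
    (hγ : ∀ i, -(γ i) ≤ (A *ᵥ g - b) i ∧ (A *ᵥ g - b) i ≤ γ i)
    (hν : ∀ j, -(ν j) ≤ g j ∧ g j ≤ ν j) :
    _root_.enorm (|A *ᵥ g - b| + bbar + Abar *ᵥ |g|) ^ 2
      ≤ _root_.enorm (γ + bbar + Abar *ᵥ ν) ^ 2 := by
  refine enorm_sq_le_enorm_sq_of_abs_le fun i => ?_
  have h_nonneg : 0 ≤ (|A *ᵥ g - b| + bbar + Abar *ᵥ |g|) i :=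
    add_nonneg (add_nonneg (abs_nonneg _) (hbbar i)) (mulVec_abs_nonneg hAbar g i)
  have hAν : (Abar *ᵥ |g|) i ≤ (Abar *ᵥ ν) i :=
    dotProduct_le_dotProduct_of_nonneg_left (fun j => abs_le.2 (hν j)) fun j => hAbar i j
  rw [abs_of_nonneg h_nonneg]
  simp only [Pi.add_apply, Pi.abs_apply] at hAν ⊢
  linarith [abs_le.2 (hγ i)]

end IntervalUncertainty

theorem minmax_interval_equiv_qp_general
    (m n : ℕ) (A : Matrix (Fin m) (Fin n) ℝ) (b : Fin m → ℝ)
    (Abar : Matrix (Fin m) (Fin n) ℝ) (hAbar : ∀ i j, 0 ≤ Abar i j)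
    (bbar : Fin m → ℝ) (hbbar : ∀ i, 0 ≤ bbar i)
    (𝒢 : Set (Fin n → ℝ))
    (W : (Fin n → ℝ) → ℝ)
    (hW : ∀ g, W g = sSup {c | ∃ (ΔA : Matrix (Fin m) (Fin n) ℝ) (Δb : Fin m → ℝ),
        (∀ i j, |ΔA i j| ≤ Abar i j) ∧ (∀ i, |Δb i| ≤ bbar i) ∧
        c = (_root_.enorm ((A + ΔA).mulVec g - (b + Δb))) ^ 2})
    (feas : Set ((Fin n → ℝ) × (Fin m → ℝ) × (Fin n → ℝ)))
    (hfeas : feas = {t | t.1 ∈ 𝒢 ∧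
        (∀ i, -(t.2.1 i) ≤ (A.mulVec t.1 - b) i ∧ (A.mulVec t.1 - b) i ≤ t.2.1 i) ∧
        (∀ j, -(t.2.2 j) ≤ t.1 j ∧ t.1 j ≤ t.2.2 j)})
    (obj : ((Fin n → ℝ) × (Fin m → ℝ) × (Fin n → ℝ)) → ℝ)
    (hobj : ∀ t, obj t = (_root_.enorm (t.2.1 + bbar + Abar.mulVec t.2.2)) ^ 2) :
    -- (a) the optimal values coincide
    sInf (W '' 𝒢) = sInf (obj '' feas) ∧
    -- (b) minimizer characterization
    (∀ gs ∈ 𝒢, (∀ g ∈ 𝒢, W gs ≤ W g) ↔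
        ∃ γ ν, (gs, γ, ν) ∈ feas ∧ ∀ t ∈ feas, obj (gs, γ, ν) ≤ obj t) ∧
    -- ... in which case the optimal value is `‖γ* + b̄ + Āν*‖²`
    (∀ gs γ ν, (gs, γ, ν) ∈ feas → (∀ t ∈ feas, obj (gs, γ, ν) ≤ obj t) →
        sInf (W '' 𝒢) = (_root_.enorm (γ + bbar + Abar.mulVec ν)) ^ 2) := by
  have hW_eq : W = fun g => obj (g, |A *ᵥ g - b|, |g|) := funext fun g => by
    rw [hW, hobj]
    exact (isGreatest_perturbed_residual_sq A b hAbar hbbar g).csSup_eq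
  subst hW_eq
  have hT : ∀ t ∈ feas, t.1 ∈ 𝒢 := by
    rw [hfeas]
    exact fun t ht => ht.1
  have hφ : ∀ g ∈ 𝒢, (g, |A *ᵥ g - b|, |g|) ∈ feas := by
    rw [hfeas]
    exact fun g hg => ⟨hg, fun i => ⟨neg_abs_le _, le_abs_self _⟩,
      fun j => ⟨neg_abs_le _, le_abs_self _⟩⟩
  have hmin : ∀ t ∈ feas, obj (t.1, |A *ᵥ t.1 - b|, |t.1|) ≤ obj t := by
    rw [hfeas]
    rintro ⟨g, γ, ν⟩ ⟨-, hγ, hν⟩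
    rw [hobj, hobj]
    exact enorm_sq_abs_residual_le_of_feasible A b hAbar hbbar hγ hν
  have h_inf := sInf_image_eq_of_partial_min hT hφ hmin
  refine ⟨h_inf, fun gs hgs => ?_, fun gs γ ν hf hopt => ?_⟩
  · simpa only [isMinOn_iff, Prod.exists] using isMinOn_partial_min_iff hT hφ hmin hgs
  · rw [h_inf, ← hobj (gs, γ, ν)]
    exact IsLeast.csInf_eq ⟨⟨_, hf, rfl⟩, by rintro _ ⟨t, ht, rfl⟩; exact hopt t ht⟩

/-- Proposition 3 of the paper: the min-max robust problem with interval uncertainties is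
equivalent to a convex quadratic program with auxiliary variables `γ` and `ν`. -/
theorem minmax_interval_equiv_qp
    (m n : ℕ) (A : Matrix (Fin m) (Fin n) ℝ) (b : Fin m → ℝ)
    (Abar : Matrix (Fin m) (Fin n) ℝ) (hAbar : ∀ i j, 0 ≤ Abar i j)
    (bbar : Fin m → ℝ) (hbbar : ∀ i, 0 ≤ bbar i)
    (𝒢 : Set (Fin n → ℝ)) (h𝒢 : 𝒢.Nonempty)
    (W : (Fin n → ℝ) → ℝ)
    (hW : ∀ g, W g = sSup {c | ∃ (ΔA : Matrix (Fin m) (Fin n) ℝ) (Δb : Fin m → ℝ),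
        (∀ i j, |ΔA i j| ≤ Abar i j) ∧ (∀ i, |Δb i| ≤ bbar i) ∧
        c = (_root_.enorm ((A + ΔA).mulVec g - (b + Δb))) ^ 2})
    (feas : Set ((Fin n → ℝ) × (Fin m → ℝ) × (Fin n → ℝ)))
    (hfeas : feas = {t | t.1 ∈ 𝒢 ∧
        (∀ i, -(t.2.1 i) ≤ (A.mulVec t.1 - b) i ∧ (A.mulVec t.1 - b) i ≤ t.2.1 i) ∧
        (∀ j, -(t.2.2 j) ≤ t.1 j ∧ t.1 j ≤ t.2.2 j)})
    (obj : ((Fin n → ℝ) × (Fin m → ℝ) × (Fin n → ℝ)) → ℝ)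
    (hobj : ∀ t, obj t = (_root_.enorm (t.2.1 + bbar + Abar.mulVec t.2.2)) ^ 2) :
    -- (a) the optimal values coincide
    sInf (W '' 𝒢) = sInf (obj '' feas) ∧
    -- (b) minimizer characterization
    (∀ gs ∈ 𝒢, (∀ g ∈ 𝒢, W gs ≤ W g) ↔
        ∃ γ ν, (gs, γ, ν) ∈ feas ∧ ∀ t ∈ feas, obj (gs, γ, ν) ≤ obj t) ∧
    -- ... in which case the optimal value is `‖γ* + b̄ + Āν*‖²`
    (∀ gs γ ν, (gs, γ, ν) ∈ feas → (∀ t ∈ feas, obj (gs, γ, ν) ≤ obj t) →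
        sInf (W '' 𝒢) = (_root_.enorm (γ + bbar + Abar.mulVec ν)) ^ 2) :=
  minmax_interval_equiv_qp_general m n A b Abar hAbar bbar hbbar 𝒢 W hW feas hfeas obj hobj
end

section
/- Let D ∈ ℝ^{m×n} with n ≥ 1, c ∈ ℝ^m, ρ > 0, and τ ∈ ℝ. Then the following are equivalent: (a) for every ξ ∈ ℝ^n with ‖ξ‖ ≤ ρ one has ‖Dξ − c‖² ≤ τ; (b) there exists λ ≥ 0 such that the (1+n+m)×(1+n+m) symmetric block matrix with blocks [[τ − λρ², 0, cᵀ], [0, λI_n, Dᵀ], [c, D, I_m]] is positive semidefinite. -/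
/-!
S-lemma through the maximiser `p` of `f ξ = ‖Dξ - c‖²` on the sphere `‖ξ‖ = ρ`. Reflecting `p`
in the hyperplane orthogonal to any direction `d` keeps it on the sphere; the resulting
inequality gives, in the limit along `d + ε p`, the Lagrange condition `Dᵀ(Dp - c) = λ p` and the
second-order condition `DᵀD ≤ λ I`, hence `λ ≥ 0` and `f ξ ≤ τ + λ (‖ξ‖² - ρ²)` for every `ξ`.
Homogenised in `(t, ξ)`, this is exactly the Schur complement of the identity block of the LMI.
-/

open Matrix

/-- The `(1+n+m)×(1+n+m)` symmetric block matrix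
`[[τ − λρ², 0, cᵀ], [0, λIₙ, Dᵀ], [c, D, Iₘ]]`. -/
noncomputable def bigLMI {m n : ℕ} (D : Matrix (Fin m) (Fin n) ℝ) (c : Fin m → ℝ)
    (topLeft lam : ℝ) :
    Matrix (Fin 1 ⊕ (Fin n ⊕ Fin m)) (Fin 1 ⊕ (Fin n ⊕ Fin m)) ℝ :=
  Matrix.fromBlocks
    (Matrix.of fun (_ : Fin 1) (_ : Fin 1) => topLeft)
    (Matrix.of fun (_ : Fin 1) (j : Fin n ⊕ Fin m) =>
      Sum.elim (fun _ : Fin n => (0 : ℝ)) (fun i : Fin m => c i) j)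
    (Matrix.of fun (i : Fin n ⊕ Fin m) (_ : Fin 1) =>
      Sum.elim (fun _ : Fin n => (0 : ℝ)) (fun k : Fin m => c k) i)
    (Matrix.fromBlocks (lam • (1 : Matrix (Fin n) (Fin n) ℝ)) Dᵀ
      D (1 : Matrix (Fin m) (Fin m) ℝ))

theorem le_of_forall_pos_le_of_continuous {f g : ℝ → ℝ} (hf : Continuous f)
    (hg : Continuous g) (h : ∀ ε > 0, f ε ≤ g ε) : f 0 ≤ g 0 :=
  have hsub : Set.Ioi (0 : ℝ) ⊆ {ε | f ε ≤ g ε} := h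
  (isClosed_le hf hg).closure_subset_iff.2 hsub (by rw [closure_Ioi]; exact Set.self_mem_Ici)

section DotProduct

variable {ι : Type*} [Fintype ι]

theorem dotProduct_self_add {R : Type*} [CommRing R] (a b : ι → R) :
    (a + b) ⬝ᵥ (a + b) = a ⬝ᵥ a + 2 * (a ⬝ᵥ b) + b ⬝ᵥ b := by
  rw [dotProduct_add, add_dotProduct, add_dotProduct, dotProduct_comm b a]; ring

theorem dotProduct_self_nonneg {R : Type*} [Ring R] [LinearOrder R] [IsStrictOrderedRing R]
    (v : ι → R) : 0 ≤ v ⬝ᵥ v :=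
  Finset.sum_nonneg fun i _ => mul_self_nonneg (v i)

theorem dotProduct_self_pos {R : Type*} [Ring R] [LinearOrder R] [IsStrictOrderedRing R]
    {v : ι → R} (hv : v ≠ 0) : 0 < v ⬝ᵥ v :=
  (dotProduct_self_nonneg v).lt_of_ne' (mt dotProduct_self_eq_zero.mp hv)

theorem eq_smul_of_forall_dotProduct_eq_zero {p u : ι → ℝ} (hp : p ≠ 0)
    (hu : ∀ d, p ⬝ᵥ d = 0 → u ⬝ᵥ d = 0) : u = (u ⬝ᵥ p / (p ⬝ᵥ p)) • p := by
  have hpp : p ⬝ᵥ p ≠ 0 := (dotProduct_self_pos hp).ne'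
  set w := u - (u ⬝ᵥ p / (p ⬝ᵥ p)) • p
  have hpw : p ⬝ᵥ w = 0 := by
    simp only [w, dotProduct_sub, dotProduct_smul, smul_eq_mul, dotProduct_comm p u]
    field_simp; ring
  have hww : w ⬝ᵥ w = 0 := by
    rw [show w ⬝ᵥ w = u ⬝ᵥ w - (u ⬝ᵥ p / (p ⬝ᵥ p)) * (p ⬝ᵥ w) by
      simp only [w, sub_dotProduct, smul_dotProduct, smul_eq_mul], hu w hpw, hpw, mul_zero,
      sub_zero]
  exact sub_eq_zero.mp (dotProduct_self_eq_zero.mp hww)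

theorem isCompact_setOf_dotProduct_self_eq (r : ℝ) :
    IsCompact {z : ι → ℝ | z ⬝ᵥ z = r ^ 2} := by
  refine (isCompact_univ_pi fun _ => isCompact_Icc (a := -|r|) (b := |r|)).of_isClosed_subset
    (isClosed_eq (by fun_prop) continuous_const) fun z hz i _ => abs_le.mp ?_
  have hzi : z i * z i ≤ z ⬝ᵥ z :=
    Finset.single_le_sum (f := fun j => z j * z j) (fun j _ => mul_self_nonneg (z j))
      (Finset.mem_univ i)
  have hz : z ⬝ᵥ z = r ^ 2 := hz
  exact sq_le_sq.mp (by rw [← hz, sq]; exact hzi)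

end DotProduct

section SqResidual

variable {ι κ : Type*} [Fintype ι] [Fintype κ] (D : Matrix κ ι ℝ) (c : κ → ℝ)

def sqResidual (ξ : ι → ℝ) : ℝ := (D *ᵥ ξ - c) ⬝ᵥ (D *ᵥ ξ - c)

theorem sqResidual_add (p h : ι → ℝ) :
    sqResidual D c (p + h) =
      sqResidual D c p + 2 * ((D *ᵥ p - c) ⬝ᵥ (D *ᵥ h)) + (D *ᵥ h) ⬝ᵥ (D *ᵥ h) := by
  rw [sqResidual, mulVec_add, add_sub_right_comm, dotProduct_self_add, sqResidual]

theorem sqResidual_le_of_lagrange {p : ι → ℝ} {lam : ℝ} (hlam : (D *ᵥ p - c) ᵥ* D = lam • p)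
    (hD : ∀ d, (D *ᵥ d) ⬝ᵥ (D *ᵥ d) ≤ lam * (d ⬝ᵥ d)) (ξ : ι → ℝ) :
    sqResidual D c ξ ≤ sqResidual D c p + lam * (ξ ⬝ᵥ ξ - p ⬝ᵥ p) := by
  have hξ : ξ = p + (ξ - p) := (add_sub_cancel p ξ).symm
  have hlin : (D *ᵥ p - c) ⬝ᵥ (D *ᵥ (ξ - p)) = lam * (p ⬝ᵥ (ξ - p)) := by
    rw [dotProduct_mulVec, hlam, smul_dotProduct, smul_eq_mul]
  have hf := sqResidual_add D c p (ξ - p)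
  have hnorm := dotProduct_self_add p (ξ - p)
  rw [← hξ, hlin] at hf
  rw [← hξ] at hnorm
  linear_combination hf + hD (ξ - p) - lam * hnorm

def IsSphereMaximizer (p : ι → ℝ) : Prop :=
  ∀ z, z ⬝ᵥ z = p ⬝ᵥ p → sqResidual D c z ≤ sqResidual D c p

variable {D c}

theorem exists_isSphereMaximizer [Nonempty ι] (r : ℝ) :
    ∃ p, p ⬝ᵥ p = r ^ 2 ∧ IsSphereMaximizer D c p := by
  classical
  have hne : {z : ι → ℝ | z ⬝ᵥ z = r ^ 2}.Nonempty :=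
    ⟨Pi.single (Classical.arbitrary ι) r, by simp [dotProduct_single, sq]⟩
  obtain ⟨p, hp, hmax⟩ := (isCompact_setOf_dotProduct_self_eq r).exists_isMaxOn hne
    (show Continuous (sqResidual D c) by unfold sqResidual; fun_prop).continuousOn
  exact ⟨p, hp, fun z hz => hmax (hz.trans hp)⟩

namespace IsSphereMaximizer

variable {p : ι → ℝ} (hp : IsSphereMaximizer D c p)
include hp

-- Compare `p` with its reflection in the hyperplane `d⊥`, which lies on the same sphere.
theorem reflection (d : ι → ℝ) :
    (p ⬝ᵥ d) ^ 2 * ((D *ᵥ d) ⬝ᵥ (D *ᵥ d)) ≤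
      (p ⬝ᵥ d) * (d ⬝ᵥ d) * ((D *ᵥ p - c) ⬝ᵥ (D *ᵥ d)) := by
  rcases eq_or_ne d 0 with rfl | hd
  · simp
  have hq : 0 < d ⬝ᵥ d := dotProduct_self_pos hd
  set t := 2 * (p ⬝ᵥ d) / (d ⬝ᵥ d)
  have htq : t * (d ⬝ᵥ d) = 2 * (p ⬝ᵥ d) := div_mul_cancel₀ _ hq.ne'
  have hsphere : (p + (-t) • d) ⬝ᵥ (p + (-t) • d) = p ⬝ᵥ p := by
    rw [dotProduct_self_add, dotProduct_smul, smul_dotProduct, dotProduct_smul]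
    simp only [smul_eq_mul]
    linear_combination t * htq
  have hle := hp _ hsphere
  rw [sqResidual_add, mulVec_smul, dotProduct_smul, smul_dotProduct, dotProduct_smul] at hle
  simp only [smul_eq_mul] at hle
  have hpd : p ⬝ᵥ d = t * (d ⬝ᵥ d) / 2 := by linarith
  have key : t ^ 2 * ((D *ᵥ d) ⬝ᵥ (D *ᵥ d)) ≤ 2 * t * ((D *ᵥ p - c) ⬝ᵥ (D *ᵥ d)) := by
    linarith
  rw [hpd]
  linear_combination (d ⬝ᵥ d) ^ 2 / 4 * key

theorem dotProduct_mulVec_eq_zero (hp0 : p ≠ 0) {d : ι → ℝ} (hd : p ⬝ᵥ d = 0) :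
    (D *ᵥ p - c) ⬝ᵥ (D *ᵥ d) = 0 := by
  have hpp := dotProduct_self_pos hp0
  -- first-order condition, read off from the reflection inequality along `d + ε p` as `ε → 0⁺`
  have half : ∀ d, p ⬝ᵥ d = 0 → 0 ≤ (d ⬝ᵥ d) * ((D *ᵥ p - c) ⬝ᵥ (D *ᵥ d)) := by
    intro d hd
    have hlim := le_of_forall_pos_le_of_continuous
      (f := fun ε => ε * (p ⬝ᵥ p) * ((D *ᵥ (d + ε • p)) ⬝ᵥ (D *ᵥ (d + ε • p))))
      (g := fun ε => ((d + ε • p) ⬝ᵥ (d + ε • p)) * ((D *ᵥ p - c) ⬝ᵥ (D *ᵥ (d + ε • p))))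
      (by fun_prop) (by fun_prop) fun ε hε => by
        have h := hp.reflection (d + ε • p)
        rw [dotProduct_add, hd, dotProduct_smul, smul_eq_mul, zero_add] at h
        refine le_of_mul_le_mul_left ?_ (mul_pos hε hpp)
        linear_combination h
    simpa using hlim
  have h1 := half d hd
  have h2 := half (-d) (by rw [dotProduct_neg, hd, neg_zero])
  rw [mulVec_neg, dotProduct_neg, neg_dotProduct, dotProduct_neg, neg_neg] at h2
  rcases eq_or_ne d 0 with rfl | hd0
  · simp
  · exact (mul_eq_zero.mp (le_antisymm (by linarith) h1)).resolve_left
      (dotProduct_self_pos hd0).ne'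

theorem exists_lagrange (hp0 : p ≠ 0) : ∃ lam : ℝ, (D *ᵥ p - c) ᵥ* D = lam • p :=
  ⟨_, eq_smul_of_forall_dotProduct_eq_zero hp0 fun d hd => by
    rw [← dotProduct_mulVec]; exact hp.dotProduct_mulVec_eq_zero hp0 hd⟩

theorem quadratic_le (hp0 : p ≠ 0) {lam : ℝ} (hlam : (D *ᵥ p - c) ᵥ* D = lam • p)
    (d : ι → ℝ) : (D *ᵥ d) ⬝ᵥ (D *ᵥ d) ≤ lam * (d ⬝ᵥ d) := by
  have hdir : ∀ d, p ⬝ᵥ d ≠ 0 → (D *ᵥ d) ⬝ᵥ (D *ᵥ d) ≤ lam * (d ⬝ᵥ d) := by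
    intro d hd
    have h := hp.reflection d
    rw [dotProduct_mulVec (D *ᵥ p - c), hlam, smul_dotProduct, smul_eq_mul] at h
    refine le_of_mul_le_mul_left ?_ (sq_pos_of_ne_zero hd)
    linear_combination h
  rcases ne_or_eq (p ⬝ᵥ d) 0 with hd | hd
  · exact hdir d hd
  -- `d` is a limit of the vectors `d + ε p`, which are not orthogonal to `p`
  have hpp := dotProduct_self_pos hp0
  simpa using le_of_forall_pos_le_of_continuous
    (f := fun ε => (D *ᵥ (d + ε • p)) ⬝ᵥ (D *ᵥ (d + ε • p)))
    (g := fun ε => lam * ((d + ε • p) ⬝ᵥ (d + ε • p))) (by fun_prop) (by fun_prop)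
    fun ε hε => hdir _ (by
      rw [dotProduct_add, hd, dotProduct_smul, smul_eq_mul, zero_add]; positivity)

end IsSphereMaximizer

theorem exists_multiplier_of_sqResidual_le_on_sphere [Nonempty ι] {ρ τ : ℝ} (hρ : ρ ≠ 0)
    (H : ∀ ξ, ξ ⬝ᵥ ξ = ρ ^ 2 → sqResidual D c ξ ≤ τ) :
    ∃ lam : ℝ, 0 ≤ lam ∧ (∀ d, (D *ᵥ d) ⬝ᵥ (D *ᵥ d) ≤ lam * (d ⬝ᵥ d)) ∧
      ∀ ξ, sqResidual D c ξ ≤ τ - lam * ρ ^ 2 + lam * (ξ ⬝ᵥ ξ) := by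
  obtain ⟨p, hpρ, hp⟩ := exists_isSphereMaximizer (D := D) (c := c) ρ
  have hp0 : p ≠ 0 := by
    rintro rfl
    exact hρ (pow_eq_zero_iff two_ne_zero |>.mp (by simpa using hpρ.symm))
  obtain ⟨lam, hlam⟩ := hp.exists_lagrange hp0
  have hD := hp.quadratic_le hp0 hlam
  refine ⟨lam, ?_, hD, fun ξ => ?_⟩
  · exact nonneg_of_mul_nonneg_left ((dotProduct_self_nonneg _).trans (hD p))
      (dotProduct_self_pos hp0)
  · have := sqResidual_le_of_lagrange D c hlam hD ξ
    rw [hpρ] at this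
    linarith [H p hpρ]

theorem dotProduct_self_mulVec_add_smul_le {σ lam : ℝ}
    (hD : ∀ d, (D *ᵥ d) ⬝ᵥ (D *ᵥ d) ≤ lam * (d ⬝ᵥ d))
    (hf : ∀ ξ, sqResidual D c ξ ≤ σ + lam * (ξ ⬝ᵥ ξ)) (t : ℝ) (x : ι → ℝ) :
    (D *ᵥ x + t • c) ⬝ᵥ (D *ᵥ x + t • c) ≤ σ * t ^ 2 + lam * (x ⬝ᵥ x) := by
  rcases eq_or_ne t 0 with rfl | ht
  · simpa using hD x
  have hres : D *ᵥ ((-t⁻¹) • x) - c = (-t⁻¹) • (D *ᵥ x + t • c) := by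
    rw [mulVec_smul, smul_add, smul_smul, neg_mul, inv_mul_cancel₀ ht, neg_one_smul,
      sub_eq_add_neg]
  have h := hf ((-t⁻¹) • x)
  rw [sqResidual, hres] at h
  simp only [smul_dotProduct, dotProduct_smul, smul_eq_mul] at h
  field_simp at h
  rw [div_le_div_iff_of_pos_right (by positivity)] at h
  linarith

end SqResidual

theorem dotProduct_bigLMI_mulVec {m n : ℕ} (D : Matrix (Fin m) (Fin n) ℝ) (c : Fin m → ℝ)
    (σ lam : ℝ) (s : Fin 1 → ℝ) (x : Fin n → ℝ) (y : Fin m → ℝ) :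
    Sum.elim s (Sum.elim x y) ⬝ᵥ (bigLMI D c σ lam *ᵥ Sum.elim s (Sum.elim x y)) =
      (y + (D *ᵥ x + s 0 • c)) ⬝ᵥ (y + (D *ᵥ x + s 0 • c)) +
        (σ * s 0 ^ 2 + lam * (x ⬝ᵥ x) - (D *ᵥ x + s 0 • c) ⬝ᵥ (D *ᵥ x + s 0 • c)) := by
  have h₁₁ : (of fun (_ _ : Fin 1) => σ) *ᵥ s = fun _ => σ * s 0 := by
    ext; simp [mulVec, dotProduct]
  have h₁₂ : (of fun (_ : Fin 1) j => Sum.elim (fun _ : Fin n => (0 : ℝ)) (fun i => c i) j) *ᵥ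
      Sum.elim x y = fun _ => c ⬝ᵥ y := by
    ext; simp [mulVec, dotProduct, Fintype.sum_sum_type]
  have h₂₁ : (of fun i (_ : Fin 1) => Sum.elim (fun _ : Fin n => (0 : ℝ)) (fun i => c i) i) *ᵥ
      s = Sum.elim (0 : Fin n → ℝ) (s 0 • c) := by
    ext (i | i) <;> simp [mulVec, dotProduct, mul_comm]
  have hs : ∀ a : ℝ, s ⬝ᵥ (fun _ => a) = s 0 * a := fun a => by simp [dotProduct]
  simp only [bigLMI, fromBlocks_mulVec, Sum.elim_comp_inl, Sum.elim_comp_inr, h₁₁, h₁₂, h₂₁,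
    ← Sum.elim_add_add, sumElim_dotProduct_sumElim]
  simp only [dotProduct_add, add_dotProduct, hs, zero_add, smul_mulVec, one_mulVec,
    dotProduct_smul, smul_dotProduct, smul_eq_mul, dotProduct_mulVec x Dᵀ, vecMul_transpose,
    dotProduct_comm y, dotProduct_comm (D *ᵥ x) c]
  ring

theorem bigLMI_isHermitian {m n : ℕ} (D : Matrix (Fin m) (Fin n) ℝ) (c : Fin m → ℝ)
    (σ lam : ℝ) : (bigLMI D c σ lam).IsHermitian := by
  refine .fromBlocks (by ext; simp) (by ext; simp) (.fromBlocks ?_ (by simp) isHermitian_one)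
  simp [IsHermitian]

theorem bigLMI_posSemidef_iff {m n : ℕ} (D : Matrix (Fin m) (Fin n) ℝ) (c : Fin m → ℝ)
    (σ lam : ℝ) : (bigLMI D c σ lam).PosSemidef ↔
      ∀ (t : ℝ) (x : Fin n → ℝ),
        (D *ᵥ x + t • c) ⬝ᵥ (D *ᵥ x + t • c) ≤ σ * t ^ 2 + lam * (x ⬝ᵥ x) := by
  simp only [posSemidef_iff_dotProduct_mulVec, star_trivial, bigLMI_isHermitian, true_and]
  constructor
  · intro h t x
    have hxy := h (Sum.elim (fun _ => t) (Sum.elim x (-(D *ᵥ x + t • c))))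
    rw [dotProduct_bigLMI_mulVec, neg_add_cancel, zero_dotProduct, zero_add] at hxy
    linarith
  · intro h v
    obtain ⟨s, x, y, rfl⟩ : ∃ s x y, v = Sum.elim s (Sum.elim x y) :=
      ⟨v ∘ Sum.inl, (v ∘ Sum.inr) ∘ Sum.inl, (v ∘ Sum.inr) ∘ Sum.inr, by
        rw [Sum.elim_comp_inl_inr, Sum.elim_comp_inl_inr]⟩
    rw [dotProduct_bigLMI_mulVec]
    exact add_nonneg (dotProduct_self_nonneg _) (sub_nonneg.mpr (h _ _))

theorem enorm_eq_sqrt_dotProduct {n : ℕ} (x : Fin n → ℝ) : _root_.enorm x = √(x ⬝ᵥ x) := by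
  simp only [_root_.enorm, dotProduct, sq]

/-- The semi-infinite constraint characterization of Proposition 4 of the paper
(S-lemma plus Schur complement): `‖Dξ − c‖² ≤ τ` for all `‖ξ‖ ≤ ρ` iff some `λ ≥ 0`
certifies it via a linear matrix inequality. -/
theorem semi_infinite_iff_LMI
    (m n : ℕ) (hn : 1 ≤ n) (D : Matrix (Fin m) (Fin n) ℝ) (c : Fin m → ℝ)
    (ρ τ : ℝ) (hρ : 0 < ρ) :
    (∀ ξ : Fin n → ℝ, _root_.enorm ξ ≤ ρ → (_root_.enorm (D.mulVec ξ - c)) ^ 2 ≤ τ) ↔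
    (∃ lam : ℝ, 0 ≤ lam ∧ (bigLMI D c (τ - lam * ρ ^ 2) lam).PosSemidef) := by
  simp only [enorm_eq_sqrt_dotProduct, Real.sqrt_le_left hρ.le,
    Real.sq_sqrt (dotProduct_self_nonneg _), bigLMI_posSemidef_iff]
  constructor
  · intro H
    have : Nonempty (Fin n) := ⟨⟨0, hn⟩⟩
    obtain ⟨lam, hlam, hD, hf⟩ :=
      exists_multiplier_of_sqResidual_le_on_sphere hρ.ne' fun ξ hξ => H ξ hξ.le
    exact ⟨lam, hlam, dotProduct_self_mulVec_add_smul_le hD hf⟩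
  · rintro ⟨lam, hlam, h⟩ ξ hξ
    have hξc := h (-1) ξ
    rw [neg_one_smul, ← sub_eq_add_neg] at hξc
    nlinarith [mul_le_mul_of_nonneg_left hξ hlam]
end

section
/- Let A ∈ ℝ^{m×n}, b ∈ ℝ^m, λ_g > 0, and let 𝒢 ⊆ ℝ^n be a nonempty closed convex set. Suppose g* ∈ 𝒢, g* ≠ 0, minimizes ‖Ag − b‖² + λ_g‖g‖² over 𝒢. Define ρ_u := λ_g·√(‖g*‖² + 1) / ‖Ag* − b‖ if Ag* ≠ b, and ρ_u := λ_g·√(‖g*‖² + 1) otherwise. Then g* also minimizes ‖Ag − b‖ + ρ_u·√(‖g‖² + 1) over 𝒢. -/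
open Matrix

/-- Euclidean norm of a vector in `ℝ^n`. -/
noncomputable def enormVec {n : ℕ} (x : Fin n → ℝ) : ℝ := Real.sqrt (∑ i, x i ^ 2)

/-!
Minimality of `g*` for the ridge objective over the convex set gives the first-order condition
`⟪Ag* - b, A(g - g*)⟫ + λ⟪g*, g - g*⟫ ≥ 0`. If `r = ‖Ag* - b‖ > 0`, then `ρ r = λ √(‖g*‖² + 1)`,
and after multiplication by `r` the robust inequality is this condition plus two Cauchy–Schwarz
estimates: `⟪Ag* - b, Ag - b⟫ ≤ r ‖Ag - b‖`, and `⟪g*, g⟫ + 1 ≤ √(‖g*‖² + 1) √(‖g‖² + 1)` for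
the lifted vectors `(g*, 1)`, `(g, 1)`. If `r = 0`, the condition reads `⟪g*, g - g*⟫ ≥ 0`,
so `‖g*‖ ≤ ‖g‖`.
-/

open scoped RealInnerProductSpace

section

variable {E F : Type*} [NormedAddCommGroup E] [InnerProductSpace ℝ E]
  [NormedAddCommGroup F] [InnerProductSpace ℝ F]

theorem real_inner_add_one_le_sqrt_mul_sqrt (x y : E) :
    ⟪x, y⟫ + 1 ≤ √(‖x‖ ^ 2 + 1) * √(‖y‖ ^ 2 + 1) := by
  rw [← Real.sqrt_mul (by positivity)]
  apply Real.le_sqrt_of_sq_le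
  have hxy := real_inner_le_norm x y
  have hyx := neg_le_of_abs_le (abs_real_inner_le_norm x y)
  nlinarith [sq_nonneg (‖x‖ - ‖y‖), mul_nonneg (norm_nonneg x) (norm_nonneg y)]

theorem norm_le_norm_of_real_inner_sub_nonneg {x y : E} (h : 0 ≤ ⟪x, y - x⟫) : ‖x‖ ≤ ‖y‖ := by
  rw [inner_sub_right, real_inner_self_eq_norm_sq, sub_nonneg] at h
  have := h.trans (real_inner_le_norm x y)
  rcases (norm_nonneg x).eq_or_lt with hx | hx
  · rw [← hx]; exact norm_nonneg y
  · nlinarith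

theorem add_mul_sqrt_le_of_real_inner_nonneg_of_ne_zero {u v : F} {x y : E} {lam ρ : ℝ}
    (hlam : 0 ≤ lam) (hu : u ≠ 0) (hρ : ρ * ‖u‖ = lam * √(‖x‖ ^ 2 + 1))
    (h : 0 ≤ ⟪u, v - u⟫ + lam * ⟪x, y - x⟫) :
    ‖u‖ + ρ * √(‖x‖ ^ 2 + 1) ≤ ‖v‖ + ρ * √(‖y‖ ^ 2 + 1) := by
  refine le_of_mul_le_mul_left ?_ (norm_pos_iff.2 hu)
  rw [inner_sub_right, inner_sub_right, real_inner_self_eq_norm_sq,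
    real_inner_self_eq_norm_sq] at h
  calc ‖u‖ * (‖u‖ + ρ * √(‖x‖ ^ 2 + 1))
      = ‖u‖ ^ 2 + lam * (√(‖x‖ ^ 2 + 1) * √(‖x‖ ^ 2 + 1)) := by
        rw [← mul_assoc lam, ← hρ]; ring
    _ = ‖u‖ ^ 2 + lam * (‖x‖ ^ 2 + 1) := by rw [Real.mul_self_sqrt (by positivity)]
    _ ≤ ⟪u, v⟫ + lam * (⟪x, y⟫ + 1) := by linarith
    _ ≤ ‖u‖ * ‖v‖ + lam * (√(‖x‖ ^ 2 + 1) * √(‖y‖ ^ 2 + 1)) :=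
      add_le_add (real_inner_le_norm u v)
        (mul_le_mul_of_nonneg_left (real_inner_add_one_le_sqrt_mul_sqrt x y) hlam)
    _ = ‖u‖ * (‖v‖ + ρ * √(‖y‖ ^ 2 + 1)) := by rw [← mul_assoc lam, ← hρ]; ring

theorem add_mul_sqrt_le_of_real_inner_nonneg_of_eq_zero {u v : F} {x y : E} {lam ρ : ℝ}
    (hlam : 0 < lam) (hρ : 0 ≤ ρ) (hu : u = 0) (h : 0 ≤ ⟪u, v - u⟫ + lam * ⟪x, y - x⟫) :
    ‖u‖ + ρ * √(‖x‖ ^ 2 + 1) ≤ ‖v‖ + ρ * √(‖y‖ ^ 2 + 1) := by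
  subst hu
  rw [inner_zero_left, zero_add] at h
  have hxy := norm_le_norm_of_real_inner_sub_nonneg (nonneg_of_mul_nonneg_right h hlam)
  have := mul_le_mul_of_nonneg_left (Real.sqrt_le_sqrt (by gcongr : ‖x‖ ^ 2 + 1 ≤ ‖y‖ ^ 2 + 1)) hρ
  rw [norm_zero, zero_add]
  linarith [norm_nonneg v]

noncomputable def ridgeObjective (T : E →L[ℝ] F) (b : F) (lam : ℝ) (x : E) : ℝ :=
  ‖T x - b‖ ^ 2 + lam * ‖x‖ ^ 2

noncomputable def robustObjective (T : E →L[ℝ] F) (b : F) (ρ : ℝ) (x : E) : ℝ :=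
  ‖T x - b‖ + ρ * √(‖x‖ ^ 2 + 1)

theorem hasFDerivAt_ridgeObjective (T : E →L[ℝ] F) (b : F) (lam : ℝ) (x : E) :
    HasFDerivAt (ridgeObjective T b lam)
      (2 • (innerSL ℝ (T x - b)).comp T + lam • 2 • innerSL ℝ x) x :=
  (T.hasFDerivAt.sub_const b).norm_sq.add ((hasStrictFDerivAt_norm_sq x).hasFDerivAt.const_mul lam)

theorem inner_nonneg_of_isMinOn_ridgeObjective {T : E →L[ℝ] F} {b : F} {lam : ℝ}
    {S : Set E} (hS : Convex ℝ S) {x y : E} (hx : x ∈ S) (hy : y ∈ S)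
    (hmin : IsMinOn (ridgeObjective T b lam) S x) :
    0 ≤ ⟪T x - b, T (y - x)⟫ + lam * ⟪x, y - x⟫ := by
  have := hmin.localize.hasFDerivWithinAt_nonneg
    (hasFDerivAt_ridgeObjective T b lam x).hasFDerivWithinAt
    (sub_mem_posTangentConeAt_of_segment_subset (hS.segment_subset hx hy))
  simp only [_root_.add_apply, _root_.smul_apply, ContinuousLinearMap.comp_apply,
    innerSL_apply_apply, nsmul_eq_mul, Nat.cast_ofNat, smul_eq_mul] at this
  linarith

theorem isMinOn_robustObjective_of_isMinOn_ridgeObjective {T : E →L[ℝ] F} {b : F}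
    {lam ρ : ℝ} (hlam : 0 < lam) {S : Set E} (hS : Convex ℝ S) {x : E} (hx : x ∈ S)
    (hmin : IsMinOn (ridgeObjective T b lam) S x)
    (hρ₁ : T x ≠ b → ρ = lam * √(‖x‖ ^ 2 + 1) / ‖T x - b‖)
    (hρ₂ : T x = b → ρ = lam * √(‖x‖ ^ 2 + 1)) :
    IsMinOn (robustObjective T b ρ) S x := by
  intro y hy
  have h := inner_nonneg_of_isMinOn_ridgeObjective hS hx hy hmin
  rw [map_sub, ← sub_sub_sub_cancel_right (T y) (T x) b] at h
  by_cases hTx : T x = b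
  · exact add_mul_sqrt_le_of_real_inner_nonneg_of_eq_zero hlam (by rw [hρ₂ hTx]; positivity)
      (sub_eq_zero.2 hTx) h
  · refine add_mul_sqrt_le_of_real_inner_nonneg_of_ne_zero hlam.le (sub_ne_zero.2 hTx) ?_ h
    rw [hρ₁ hTx, div_mul_cancel₀ _ (norm_ne_zero_iff.2 (sub_ne_zero.2 hTx))]

end

theorem enormVec_eq_norm {n : ℕ} (x : Fin n → ℝ) : enormVec x = ‖WithLp.toLp 2 x‖ := by
  simp [enormVec, EuclideanSpace.norm_eq]

theorem quadratic_regularization_robustness_general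
    (m n : ℕ) (A : Matrix (Fin m) (Fin n) ℝ) (b : Fin m → ℝ)
    (lamg : ℝ) (hlamg : 0 < lamg)
    (𝒢 : Set (Fin n → ℝ)) (h𝒢cv : Convex ℝ 𝒢)
    (gs : Fin n → ℝ) (hgs : gs ∈ 𝒢)
    (hmin : ∀ g ∈ 𝒢,
      (enormVec (A.mulVec gs - b)) ^ 2 + lamg * (enormVec gs) ^ 2
        ≤ (enormVec (A.mulVec g - b)) ^ 2 + lamg * (enormVec g) ^ 2)
    (ρu : ℝ)
    (hρu1 : A.mulVec gs ≠ b →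
      ρu = lamg * Real.sqrt ((enormVec gs) ^ 2 + 1) / enormVec (A.mulVec gs - b))
    (hρu2 : A.mulVec gs = b → ρu = lamg * Real.sqrt ((enormVec gs) ^ 2 + 1)) :
    ∀ g ∈ 𝒢,
      enormVec (A.mulVec gs - b) + ρu * Real.sqrt ((enormVec gs) ^ 2 + 1)
        ≤ enormVec (A.mulVec g - b) + ρu * Real.sqrt ((enormVec g) ^ 2 + 1) := by
  intro g hg
  let T := LinearMap.toContinuousLinearMap (Matrix.toEuclideanLin A)
  have hT : ∀ x, enormVec (A *ᵥ x - b) = ‖T (WithLp.toLp 2 x) - WithLp.toLp 2 b‖ := fun x ↦ by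
    rw [enormVec_eq_norm]; rfl
  simp only [hT, enormVec_eq_norm] at hmin hρu1 hρu2 ⊢
  have hTgs : T (WithLp.toLp 2 gs) = WithLp.toLp 2 b ↔ A *ᵥ gs = b :=
    (WithLp.toLp_injective 2).eq_iff
  exact isMinOn_robustObjective_of_isMinOn_ridgeObjective hlamg
    (h𝒢cv.linear_preimage (WithLp.linearEquiv 2 ℝ _).toLinearMap) hgs
    (fun x hx ↦ hmin x.ofLp hx) (fun h ↦ hρu1 (mt hTgs.2 h)) (fun h ↦ hρu2 (hTgs.1 h)) hg

/-- Theorem 2 of the paper (robustness induced by quadratic regularization): a nonzero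
minimizer of the quadratically regularized problem also minimizes the conic objective
`‖Ag − b‖ + ρ_u √(‖g‖² + 1)` with the uncertainty bound `ρ_u` given by eq. (34). -/
theorem quadratic_regularization_robustness
    (m n : ℕ) (A : Matrix (Fin m) (Fin n) ℝ) (b : Fin m → ℝ)
    (lamg : ℝ) (hlamg : 0 < lamg)
    (𝒢 : Set (Fin n → ℝ)) (h𝒢ne : 𝒢.Nonempty) (h𝒢cl : IsClosed 𝒢) (h𝒢cv : Convex ℝ 𝒢)
    (gs : Fin n → ℝ) (hgs : gs ∈ 𝒢) (hgs0 : gs ≠ 0)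
    (hmin : ∀ g ∈ 𝒢,
      (enormVec (A.mulVec gs - b)) ^ 2 + lamg * (enormVec gs) ^ 2
        ≤ (enormVec (A.mulVec g - b)) ^ 2 + lamg * (enormVec g) ^ 2)
    (ρu : ℝ)
    (hρu1 : A.mulVec gs ≠ b →
      ρu = lamg * Real.sqrt ((enormVec gs) ^ 2 + 1) / enormVec (A.mulVec gs - b))
    (hρu2 : A.mulVec gs = b → ρu = lamg * Real.sqrt ((enormVec gs) ^ 2 + 1)) :
    ∀ g ∈ 𝒢,
      enormVec (A.mulVec gs - b) + ρu * Real.sqrt ((enormVec gs) ^ 2 + 1)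
        ≤ enormVec (A.mulVec g - b) + ρu * Real.sqrt ((enormVec g) ^ 2 + 1) :=
  quadratic_regularization_robustness_general m n A b lamg hlamg 𝒢 h𝒢cv gs hgs hmin ρu hρu1 hρu2
end

section
/- Let A ∈ ℝ^{m×n}, b ∈ ℝ^m, and let 𝒢 ⊆ ℝ^n be a nonempty closed convex set. Let 0 < λ₁ < λ₂, and for i ∈ {1,2} let gᵢ ∈ 𝒢 with gᵢ ≠ 0 be a minimizer of ‖Ag − b‖² + λᵢ‖g‖² over 𝒢. Define ρᵢ := λᵢ·√(‖gᵢ‖² + 1) / ‖Agᵢ − b‖ if Agᵢ ≠ b, and ρᵢ := λᵢ·√(‖gᵢ‖² + 1) otherwise. Then ρ₁ < ρ₂. -/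
/-!
Write `v = g₁ - g₂`, `e = A (g₂ - g₁)` and `rᵢ = A gᵢ - b`. The first-order optimality condition
of each regularized problem, tested at the other minimizer, gives `λ₁ ⟪g₁, v⟫ ≤ ⟪r₁, e⟫` and
`⟪r₂, e⟫ ≤ λ₂ ⟪g₂, v⟫`; as `⟪r₂, e⟫ = ⟪r₁, e⟫ + ‖e‖²`, `⟪g₁, v⟫ = ⟪g₂, v⟫ + ‖v‖²` and `λ₁ < λ₂`,
all four inner products are positive. Hence `ρ₁ ≤ (⟪r₁, e⟫ / ‖r₁‖) / (⟪g₁, v⟫ / ‖(g₁, 1)‖)` and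
`(⟪r₂, e⟫ / ‖r₂‖) / (⟪g₂, v⟫ / ‖(g₂, 1)‖) ≤ ρ₂`. These quotients are ratios of cosines: of the
angle between `rᵢ` and `e`, and between `(gᵢ, 1)` and `(v, 0)`. Moving `x` to `x + y` with
`⟪x, y⟫ ≥ 0` does not decrease the cosine of its angle with `y`, since
`(a + Y)² X - a² (X + 2a + Y) = (2a + Y) (X Y - a²)` for `a = ⟪x, y⟫`, `X = ‖x‖²`, `Y = ‖y‖²`,
and strictly increases it when `x` and `y` are not parallel, as `(g₂, 1)` and `(v, 0)` are not.
-/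

open Matrix

open scoped RealInnerProductSpace

lemma mul_sqrt_add_le_of_sq_le {a X Y : ℝ} (ha : 0 ≤ a) (hX : 0 ≤ X) (hY : 0 ≤ Y)
    (h : a ^ 2 ≤ X * Y) : a * √(X + 2 * a + Y) ≤ (a + Y) * √X := by
  refine (pow_le_pow_iff_left₀ (by positivity) (by positivity) two_ne_zero).1 ?_
  rw [mul_pow, mul_pow, Real.sq_sqrt (by positivity), Real.sq_sqrt hX]
  nlinarith [mul_nonneg (by positivity : 0 ≤ 2 * a + Y) (sub_nonneg.2 h)]

lemma mul_sqrt_add_lt_of_sq_lt {a X Y : ℝ} (ha : 0 ≤ a) (hX : 0 ≤ X)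
    (h : a ^ 2 < X * Y) : a * √(X + 2 * a + Y) < (a + Y) * √X := by
  have hY : 0 < Y := by nlinarith
  refine (pow_lt_pow_iff_left₀ (by positivity) (by positivity) two_ne_zero).1 ?_
  rw [mul_pow, mul_pow, Real.sq_sqrt (by positivity), Real.sq_sqrt hX]
  nlinarith [mul_pos (by positivity : 0 < 2 * a + Y) (sub_pos.2 h)]

section InnerProductSpace

variable {E F : Type*} [NormedAddCommGroup E] [InnerProductSpace ℝ E]
  [NormedAddCommGroup F] [InnerProductSpace ℝ F]

lemma left_ne_zero_of_inner_pos {x y : E} (h : 0 < ⟪x, y⟫) : x ≠ 0 := by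
  rintro rfl
  simp at h

lemma inner_add_pos_of_inner_pos {x y : E} (h : 0 < ⟪x, y⟫) : 0 < ⟪x + y, y⟫ := by
  rw [inner_add_left, real_inner_self_eq_norm_sq]
  positivity

lemma inner_mul_norm_add_le {x y : E} (h : 0 ≤ ⟪x, y⟫) :
    ⟪x, y⟫ * ‖x + y‖ ≤ ⟪x + y, y⟫ * ‖x‖ := by
  rw [← Real.sqrt_sq (norm_nonneg (x + y)), ← Real.sqrt_sq (norm_nonneg x), norm_add_sq_real,
    inner_add_left, real_inner_self_eq_norm_sq]
  refine mul_sqrt_add_le_of_sq_le h (sq_nonneg _) (sq_nonneg _) ?_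
  rw [← mul_pow]
  exact pow_le_pow_left₀ h (real_inner_le_norm x y) 2

lemma inner_mul_sqrt_norm_add_sq_add_one_lt {x y : E} (hy : y ≠ 0) (h : 0 ≤ ⟪x, y⟫) :
    ⟪x, y⟫ * √(‖x + y‖ ^ 2 + 1) < ⟪x + y, y⟫ * √(‖x‖ ^ 2 + 1) := by
  rw [norm_add_sq_real, inner_add_left, real_inner_self_eq_norm_sq,
    show ‖x‖ ^ 2 + 2 * ⟪x, y⟫ + ‖y‖ ^ 2 + 1 = ‖x‖ ^ 2 + 1 + 2 * ⟪x, y⟫ + ‖y‖ ^ 2 by ring]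
  refine mul_sqrt_add_lt_of_sq_lt h (by positivity) ?_
  calc ⟪x, y⟫ ^ 2 ≤ (‖x‖ * ‖y‖) ^ 2 := pow_le_pow_left₀ h (real_inner_le_norm x y) 2
    _ < (‖x‖ ^ 2 + 1) * ‖y‖ ^ 2 := by
      have : 0 < ‖y‖ := norm_pos_iff.2 hy
      nlinarith

lemma inner_sub_add_mul_inner_sub_nonneg_of_isMinOn (A : E →L[ℝ] F) (b : F) {𝒢 : Set E}
    (h𝒢 : Convex ℝ 𝒢) {lam : ℝ} {g₀ g : E} (hg₀ : g₀ ∈ 𝒢) (hg : g ∈ 𝒢)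
    (hmin : IsMinOn (fun g ↦ ‖A g - b‖ ^ 2 + lam * ‖g‖ ^ 2) 𝒢 g₀) :
    0 ≤ ⟪A g₀ - b, A (g - g₀)⟫ + lam * ⟪g₀, g - g₀⟫ := by
  have hderiv := ((A.hasFDerivAt.sub_const b).norm_sq).add
    ((hasStrictFDerivAt_norm_sq g₀).hasFDerivAt.const_mul lam)
  have hcone := sub_mem_posTangentConeAt_of_segment_subset (h𝒢.segment_subset hg₀ hg)
  have := hmin.localize.hasFDerivWithinAt_nonneg hderiv.hasFDerivWithinAt hcone
  simp only [_root_.add_apply, _root_.smul_apply, ContinuousLinearMap.comp_apply,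
    innerSL_apply_apply, nsmul_eq_mul, Nat.cast_ofNat, smul_eq_mul] at this
  linarith

open Classical in
/-- The bound `ρ` of eq. (34); the case `A g = b` is the paper's convention for a zero residual. -/
noncomputable def uncertaintyBound (A : E →L[ℝ] F) (b : F) (lam : ℝ) (g : E) : ℝ :=
  if A g = b then lam * √(‖g‖ ^ 2 + 1) else lam * √(‖g‖ ^ 2 + 1) / ‖A g - b‖

lemma uncertaintyBound_lt_of_lt (A : E →L[ℝ] F) (b : F) (g : E) {lam₁ lam₂ : ℝ}
    (hlam : lam₁ < lam₂) : uncertaintyBound A b lam₁ g < uncertaintyBound A b lam₂ g := by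
  unfold uncertaintyBound
  split_ifs with h
  · gcongr
  · have : 0 < ‖A g - b‖ := norm_pos_iff.2 (sub_ne_zero.2 h)
    gcongr

lemma inner_pos_of_inner_le {r e : F} {g v : E} {lam₁ lam₂ : ℝ} (hlam₁ : 0 < lam₁)
    (hlam : lam₁ < lam₂) (hv : v ≠ 0) (h₁ : lam₁ * ⟪g + v, v⟫ ≤ ⟪r, e⟫)
    (h₂ : ⟪r + e, e⟫ ≤ lam₂ * ⟪g, v⟫) : 0 < ⟪g, v⟫ ∧ 0 < ⟪r, e⟫ := by
  rw [inner_add_left, real_inner_self_eq_norm_sq] at h₁ h₂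
  have hv2 : 0 < ‖v‖ ^ 2 := by positivity
  have hgv : 0 < ⟪g, v⟫ := by nlinarith [sq_nonneg ‖e‖]
  exact ⟨hgv, by nlinarith⟩

lemma mul_sqrt_mul_norm_lt_of_inner_le {r e : F} {g v : E} {lam₁ lam₂ : ℝ} (hv : v ≠ 0)
    (hgv : 0 < ⟪g, v⟫) (hre : 0 < ⟪r, e⟫) (h₁ : lam₁ * ⟪g + v, v⟫ ≤ ⟪r, e⟫)
    (h₂ : ⟪r + e, e⟫ ≤ lam₂ * ⟪g, v⟫) :
    lam₁ * √(‖g + v‖ ^ 2 + 1) * ‖r + e‖ < lam₂ * √(‖g‖ ^ 2 + 1) * ‖r‖ := by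
  have hre' := inner_add_pos_of_inner_pos hre
  have hgv' := inner_add_pos_of_inner_pos hgv
  have hcos_r := inner_mul_norm_add_le hre.le
  have hcos_g := inner_mul_sqrt_norm_add_sq_add_one_lt hv hgv.le
  refine lt_of_mul_lt_mul_right ?_ (mul_pos hgv' hgv).le
  calc lam₁ * √(‖g + v‖ ^ 2 + 1) * ‖r + e‖ * (⟪g + v, v⟫ * ⟪g, v⟫)
      = lam₁ * ⟪g + v, v⟫ * ‖r + e‖ * (⟪g, v⟫ * √(‖g + v‖ ^ 2 + 1)) := by ring
    _ ≤ ⟪r, e⟫ * ‖r + e‖ * (⟪g, v⟫ * √(‖g + v‖ ^ 2 + 1)) := by gcongr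
    _ ≤ ⟪r + e, e⟫ * ‖r‖ * (⟪g, v⟫ * √(‖g + v‖ ^ 2 + 1)) := by gcongr
    _ < ⟪r + e, e⟫ * ‖r‖ * (⟪g + v, v⟫ * √(‖g‖ ^ 2 + 1)) := by
      have := left_ne_zero_of_inner_pos hre
      gcongr
    _ ≤ lam₂ * ⟪g, v⟫ * ‖r‖ * (⟪g + v, v⟫ * √(‖g‖ ^ 2 + 1)) := by gcongr
    _ = lam₂ * √(‖g‖ ^ 2 + 1) * ‖r‖ * (⟪g + v, v⟫ * ⟪g, v⟫) := by ring

theorem uncertaintyBound_lt_of_isMinOn (A : E →L[ℝ] F) (b : F) {𝒢 : Set E} (h𝒢 : Convex ℝ 𝒢)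
    {lam₁ lam₂ : ℝ} (hlam₁ : 0 < lam₁) (hlam : lam₁ < lam₂) {g₁ g₂ : E} (hg₁ : g₁ ∈ 𝒢)
    (hg₂ : g₂ ∈ 𝒢) (hmin₁ : IsMinOn (fun g ↦ ‖A g - b‖ ^ 2 + lam₁ * ‖g‖ ^ 2) 𝒢 g₁)
    (hmin₂ : IsMinOn (fun g ↦ ‖A g - b‖ ^ 2 + lam₂ * ‖g‖ ^ 2) 𝒢 g₂) :
    uncertaintyBound A b lam₁ g₁ < uncertaintyBound A b lam₂ g₂ := by
  obtain rfl | hne := eq_or_ne g₁ g₂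
  · exact uncertaintyBound_lt_of_lt A b g₁ hlam
  have hg : g₂ + (g₁ - g₂) = g₁ := add_sub_cancel g₂ g₁
  have hr : A g₁ - b + A (g₂ - g₁) = A g₂ - b := by rw [map_sub]; abel
  have h₁ : lam₁ * ⟪g₂ + (g₁ - g₂), g₁ - g₂⟫ ≤ ⟪A g₁ - b, A (g₂ - g₁)⟫ := by
    have := inner_sub_add_mul_inner_sub_nonneg_of_isMinOn A b h𝒢 hg₁ hg₂ hmin₁
    rw [hg]
    simp only [inner_sub_right] at this ⊢
    linarith
  have h₂ : ⟪A g₁ - b + A (g₂ - g₁), A (g₂ - g₁)⟫ ≤ lam₂ * ⟪g₂, g₁ - g₂⟫ := by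
    have := inner_sub_add_mul_inner_sub_nonneg_of_isMinOn A b h𝒢 hg₂ hg₁ hmin₂
    rw [hr, ← neg_sub g₁ g₂, map_neg, inner_neg_right]
    linarith
  have hv : g₁ - g₂ ≠ 0 := sub_ne_zero.2 hne
  obtain ⟨hgv, hre⟩ := inner_pos_of_inner_le hlam₁ hlam hv h₁ h₂
  have key := mul_sqrt_mul_norm_lt_of_inner_le hv hgv hre h₁ h₂
  have hr₁ : A g₁ - b ≠ 0 := left_ne_zero_of_inner_pos hre
  have hr₂ : A g₂ - b ≠ 0 := hr ▸ left_ne_zero_of_inner_pos (inner_add_pos_of_inner_pos hre)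
  unfold uncertaintyBound
  rw [if_neg (sub_ne_zero.1 hr₁), if_neg (sub_ne_zero.1 hr₂),
    div_lt_div_iff₀ (norm_pos_iff.2 hr₁) (norm_pos_iff.2 hr₂)]
  rwa [hg, hr] at key

end InnerProductSpace

lemma enorm_eq_norm_toLp {k : ℕ} (x : Fin k → ℝ) : _root_.enorm x = ‖WithLp.toLp 2 x‖ := by
  simp [_root_.enorm, EuclideanSpace.norm_eq]

section Matrix

variable {m n : ℕ} (A : Matrix (Fin m) (Fin n) ℝ) (b : Fin m → ℝ)

lemma isMinOn_toLp_of_forall_le {𝒢 : Set (Fin n → ℝ)} {lam : ℝ} {g₀ : Fin n → ℝ}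
    (hmin : ∀ g ∈ 𝒢, _root_.enorm (A *ᵥ g₀ - b) ^ 2 + lam * _root_.enorm g₀ ^ 2
      ≤ _root_.enorm (A *ᵥ g - b) ^ 2 + lam * _root_.enorm g ^ 2) :
    IsMinOn (fun g ↦ ‖(toEuclideanLin A).toContinuousLinearMap g - WithLp.toLp 2 b‖ ^ 2
      + lam * ‖g‖ ^ 2) (WithLp.ofLp ⁻¹' 𝒢) (WithLp.toLp 2 g₀) :=
  isMinOn_iff.2 fun g hg ↦ by
    have hle := hmin _ hg
    simp only [enorm_eq_norm_toLp] at hle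
    exact hle

lemma eq_uncertaintyBound_of_cases {lam ρ : ℝ} {g : Fin n → ℝ}
    (hρa : A *ᵥ g ≠ b → ρ = lam * √(_root_.enorm g ^ 2 + 1) / _root_.enorm (A *ᵥ g - b))
    (hρb : A *ᵥ g = b → ρ = lam * √(_root_.enorm g ^ 2 + 1)) :
    ρ = uncertaintyBound (toEuclideanLin A).toContinuousLinearMap (WithLp.toLp 2 b) lam
      (WithLp.toLp 2 g) := by
  unfold uncertaintyBound
  split_ifs with h
  · rw [hρb (WithLp.toLp_injective 2 h), enorm_eq_norm_toLp]
  · rw [hρa fun h' ↦ h (congrArg (WithLp.toLp 2) h'), enorm_eq_norm_toLp, enorm_eq_norm_toLp]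
    rfl

end Matrix

theorem quadratic_regularization_bound_monotone_general
    (m n : ℕ) (A : Matrix (Fin m) (Fin n) ℝ) (b : Fin m → ℝ)
    (𝒢 : Set (Fin n → ℝ)) (h𝒢cv : Convex ℝ 𝒢)
    (lam1 lam2 : ℝ) (hlam1 : 0 < lam1) (hlam12 : lam1 < lam2)
    (g1 g2 : Fin n → ℝ) (hg1 : g1 ∈ 𝒢) (hg2 : g2 ∈ 𝒢)
    (hmin1 : ∀ g ∈ 𝒢,
      (_root_.enorm (A.mulVec g1 - b)) ^ 2 + lam1 * (_root_.enorm g1) ^ 2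
        ≤ (_root_.enorm (A.mulVec g - b)) ^ 2 + lam1 * (_root_.enorm g) ^ 2)
    (hmin2 : ∀ g ∈ 𝒢,
      (_root_.enorm (A.mulVec g2 - b)) ^ 2 + lam2 * (_root_.enorm g2) ^ 2
        ≤ (_root_.enorm (A.mulVec g - b)) ^ 2 + lam2 * (_root_.enorm g) ^ 2)
    (ρ1 ρ2 : ℝ)
    (hρ1a : A.mulVec g1 ≠ b →
      ρ1 = lam1 * Real.sqrt ((_root_.enorm g1) ^ 2 + 1) / _root_.enorm (A.mulVec g1 - b))
    (hρ1b : A.mulVec g1 = b → ρ1 = lam1 * Real.sqrt ((_root_.enorm g1) ^ 2 + 1))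
    (hρ2a : A.mulVec g2 ≠ b →
      ρ2 = lam2 * Real.sqrt ((_root_.enorm g2) ^ 2 + 1) / _root_.enorm (A.mulVec g2 - b))
    (hρ2b : A.mulVec g2 = b → ρ2 = lam2 * Real.sqrt ((_root_.enorm g2) ^ 2 + 1)) :
    ρ1 < ρ2 := by
  rw [eq_uncertaintyBound_of_cases A b hρ1a hρ1b, eq_uncertaintyBound_of_cases A b hρ2a hρ2b]
  exact uncertaintyBound_lt_of_isMinOn _ _
    (h𝒢cv.linear_preimage (WithLp.linearEquiv 2 ℝ (Fin n → ℝ)).toLinearMap) hlam1 hlam12 hg1 hg2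
    (isMinOn_toLp_of_forall_le A b hmin1) (isMinOn_toLp_of_forall_le A b hmin2)

/-- Monotonicity claim of Theorem 2 of the paper: the implicit uncertainty-set bound
`ρ_u` of eq. (34) is strictly increasing in the quadratic regularization weight. -/
theorem quadratic_regularization_bound_monotone
    (m n : ℕ) (A : Matrix (Fin m) (Fin n) ℝ) (b : Fin m → ℝ)
    (𝒢 : Set (Fin n → ℝ)) (h𝒢ne : 𝒢.Nonempty) (h𝒢cl : IsClosed 𝒢) (h𝒢cv : Convex ℝ 𝒢)
    (lam1 lam2 : ℝ) (hlam1 : 0 < lam1) (hlam12 : lam1 < lam2)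
    (g1 g2 : Fin n → ℝ) (hg1 : g1 ∈ 𝒢) (hg2 : g2 ∈ 𝒢)
    (hg1ne : g1 ≠ 0) (hg2ne : g2 ≠ 0)
    (hmin1 : ∀ g ∈ 𝒢,
      (_root_.enorm (A.mulVec g1 - b)) ^ 2 + lam1 * (_root_.enorm g1) ^ 2
        ≤ (_root_.enorm (A.mulVec g - b)) ^ 2 + lam1 * (_root_.enorm g) ^ 2)
    (hmin2 : ∀ g ∈ 𝒢,
      (_root_.enorm (A.mulVec g2 - b)) ^ 2 + lam2 * (_root_.enorm g2) ^ 2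
        ≤ (_root_.enorm (A.mulVec g - b)) ^ 2 + lam2 * (_root_.enorm g) ^ 2)
    (ρ1 ρ2 : ℝ)
    (hρ1a : A.mulVec g1 ≠ b →
      ρ1 = lam1 * Real.sqrt ((_root_.enorm g1) ^ 2 + 1) / _root_.enorm (A.mulVec g1 - b))
    (hρ1b : A.mulVec g1 = b → ρ1 = lam1 * Real.sqrt ((_root_.enorm g1) ^ 2 + 1))
    (hρ2a : A.mulVec g2 ≠ b →
      ρ2 = lam2 * Real.sqrt ((_root_.enorm g2) ^ 2 + 1) / _root_.enorm (A.mulVec g2 - b))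
    (hρ2b : A.mulVec g2 = b → ρ2 = lam2 * Real.sqrt ((_root_.enorm g2) ^ 2 + 1)) :
    ρ1 < ρ2 :=
  quadratic_regularization_bound_monotone_general m n A b 𝒢 h𝒢cv lam1 lam2 hlam1 hlam12 g1 g2 hg1
    hg2 hmin1 hmin2 ρ1 ρ2 hρ1a hρ1b hρ2a hρ2b
end

section
/- Let A ∈ ℝ^{m×n}, b ∈ ℝ^m, and let 𝒢 ⊆ ℝ^n be a nonempty convex set. Let 0 < λ₁ < λ₂, let g₁ ∈ 𝒢 be a minimizer of ‖Ag − b‖² + λ₁‖g‖² over 𝒢, and let g₂ ∈ 𝒢 be a minimizer of ‖Ag − b‖² + λ₂‖g‖² over 𝒢. If g₁ ≠ g₂, then ‖g₁‖ > ‖g₂‖. -/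
open Matrix

/-!
Comparing the two optimality conditions at each other's minimizer gives
`(λ₂ - λ₁) (‖g₂‖² - ‖g₁‖²) ≤ 0`. If the norms were equal, the data-fit terms would be equal too, so
`g₂` would also minimize the strictly convex `λ₁`-objective, whose minimizer is unique.
-/

open Set

section Regularization

variable {𝕜 E : Type*} [Field 𝕜] [LinearOrder 𝕜] [IsStrictOrderedRing 𝕜]
  {s : Set E} {f q : E → 𝕜} {c l₁ l₂ : 𝕜} {x₁ x₂ : E}

theorem le_of_isMinOn_add_mul_of_lt (hl : l₁ < l₂) (hx₁ : x₁ ∈ s) (hx₂ : x₂ ∈ s)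
    (h₁ : IsMinOn (fun x ↦ f x + l₁ * q x) s x₁) (h₂ : IsMinOn (fun x ↦ f x + l₂ * q x) s x₂) :
    q x₂ ≤ q x₁ := by
  have key : (l₂ - l₁) * (q x₂ - q x₁) ≤ 0 := by
    linarith [isMinOn_iff.1 h₁ x₂ hx₂, isMinOn_iff.1 h₂ x₁ hx₁]
  exact sub_nonpos.1 (nonpos_of_mul_nonpos_right key (sub_pos.2 hl))

variable [AddCommGroup E] [Module 𝕜 E]

theorem StrictConvexOn.const_mul (hq : StrictConvexOn 𝕜 s q) (hc : 0 < c) :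
    StrictConvexOn 𝕜 s fun x ↦ c * q x := by
  refine ⟨hq.1, fun x hx y hy hxy a b ha hb hab ↦ ?_⟩
  calc c * q (a • x + b • y) < c * (a • q x + b • q y) :=
        mul_lt_mul_of_pos_left (hq.2 hx hy hxy ha hb hab) hc
    _ = a • (c * q x) + b • (c * q y) := by simp only [smul_eq_mul]; ring

theorem lt_of_isMinOn_add_mul_of_lt (hf : ConvexOn 𝕜 s f) (hq : StrictConvexOn 𝕜 s q)
    (hl₁ : 0 < l₁) (hl : l₁ < l₂) (hx₁ : x₁ ∈ s) (hx₂ : x₂ ∈ s)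
    (h₁ : IsMinOn (fun x ↦ f x + l₁ * q x) s x₁) (h₂ : IsMinOn (fun x ↦ f x + l₂ * q x) s x₂)
    (hne : x₁ ≠ x₂) : q x₂ < q x₁ := by
  refine (le_of_isMinOn_add_mul_of_lt hl hx₁ hx₂ h₁ h₂).lt_of_ne fun hq₂₁ ↦ hne ?_
  have h₁₂ := isMinOn_iff.1 h₁ x₂ hx₂
  have h₂₁ := isMinOn_iff.1 h₂ x₁ hx₁
  simp only [hq₂₁] at h₁₂ h₂₁
  have hf₂₁ : f x₂ = f x₁ := by linarith
  have h₂' : IsMinOn (fun x ↦ f x + l₁ * q x) s x₂ := isMinOn_iff.2 fun x hx ↦ by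
    simpa only [hf₂₁, hq₂₁] using isMinOn_iff.1 h₁ x hx
  exact (hf.add_strictConvexOn (hq.const_mul hl₁)).eq_of_isMinOn h₁ h₂' hx₁ hx₂

end Regularization

theorem strictConvexOn_univ_norm_sq {E : Type*} [NormedAddCommGroup E] [InnerProductSpace ℝ E] :
    StrictConvexOn ℝ univ fun x : E ↦ ‖x‖ ^ 2 := by
  refine (strongConvexOn_iff_convex (m := 2).2 ?_).strictConvexOn two_pos
  norm_num
  exact convexOn_const 0 convex_univ

theorem vecEnorm_eq_norm_toLp {n : ℕ} (x : Fin n → ℝ) : vecEnorm x = ‖WithLp.toLp 2 x‖ := by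
  simp [vecEnorm, EuclideanSpace.norm_eq]

theorem strictConvexOn_univ_vecEnorm_sq (n : ℕ) :
    StrictConvexOn ℝ univ fun x : Fin n → ℝ ↦ vecEnorm x ^ 2 := by
  refine ⟨convex_univ, fun x _ y _ hxy a b ha hb hab ↦ ?_⟩
  simpa [vecEnorm_eq_norm_toLp] using strictConvexOn_univ_norm_sq.2 (mem_univ (WithLp.toLp 2 x))
    (mem_univ (WithLp.toLp 2 y)) (by simpa using hxy) ha hb hab

theorem convexOn_univ_vecEnorm_mulVec_sub_sq {m n : ℕ} (A : Matrix (Fin m) (Fin n) ℝ)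
    (b : Fin m → ℝ) : ConvexOn ℝ univ fun x ↦ vecEnorm (A *ᵥ x - b) ^ 2 :=
  (strictConvexOn_univ_vecEnorm_sq m).convexOn.comp_affineMap
    (A.mulVecLin.toAffineMap - AffineMap.const ℝ (Fin n → ℝ) b)

theorem quadratic_regularization_norm_decreases_general
    (m n : ℕ) (A : Matrix (Fin m) (Fin n) ℝ) (b : Fin m → ℝ)
    (𝒢 : Set (Fin n → ℝ)) (h𝒢cv : Convex ℝ 𝒢)
    (lam1 lam2 : ℝ) (hlam1 : 0 < lam1) (hlam12 : lam1 < lam2)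
    (g1 g2 : Fin n → ℝ) (hg1 : g1 ∈ 𝒢) (hg2 : g2 ∈ 𝒢)
    (hmin1 : ∀ g ∈ 𝒢,
      (vecEnorm (A.mulVec g1 - b)) ^ 2 + lam1 * (vecEnorm g1) ^ 2
        ≤ (vecEnorm (A.mulVec g - b)) ^ 2 + lam1 * (vecEnorm g) ^ 2)
    (hmin2 : ∀ g ∈ 𝒢,
      (vecEnorm (A.mulVec g2 - b)) ^ 2 + lam2 * (vecEnorm g2) ^ 2
        ≤ (vecEnorm (A.mulVec g - b)) ^ 2 + lam2 * (vecEnorm g) ^ 2)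
    (hne : g1 ≠ g2) :
    vecEnorm g2 < vecEnorm g1 := by
  have hsq : vecEnorm g2 ^ 2 < vecEnorm g1 ^ 2 :=
    lt_of_isMinOn_add_mul_of_lt
      ((convexOn_univ_vecEnorm_mulVec_sub_sq A b).subset (subset_univ 𝒢) h𝒢cv)
      ((strictConvexOn_univ_vecEnorm_sq n).subset (subset_univ 𝒢) h𝒢cv)
      hlam1 hlam12 hg1 hg2 (isMinOn_iff.2 hmin1) (isMinOn_iff.2 hmin2) hne
  exact lt_of_pow_lt_pow_left₀ 2 (Real.sqrt_nonneg _) hsq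

/-- Intermediate claim in the proof of Theorem 2 of the paper: increasing the quadratic
regularization weight strictly decreases the norm of a (distinct) minimizer. -/
theorem quadratic_regularization_norm_decreases
    (m n : ℕ) (A : Matrix (Fin m) (Fin n) ℝ) (b : Fin m → ℝ)
    (𝒢 : Set (Fin n → ℝ)) (h𝒢ne : 𝒢.Nonempty) (h𝒢cv : Convex ℝ 𝒢)
    (lam1 lam2 : ℝ) (hlam1 : 0 < lam1) (hlam12 : lam1 < lam2)
    (g1 g2 : Fin n → ℝ) (hg1 : g1 ∈ 𝒢) (hg2 : g2 ∈ 𝒢)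
    (hmin1 : ∀ g ∈ 𝒢,
      (vecEnorm (A.mulVec g1 - b)) ^ 2 + lam1 * (vecEnorm g1) ^ 2
        ≤ (vecEnorm (A.mulVec g - b)) ^ 2 + lam1 * (vecEnorm g) ^ 2)
    (hmin2 : ∀ g ∈ 𝒢,
      (vecEnorm (A.mulVec g2 - b)) ^ 2 + lam2 * (vecEnorm g2) ^ 2
        ≤ (vecEnorm (A.mulVec g - b)) ^ 2 + lam2 * (vecEnorm g) ^ 2)
    (hne : g1 ≠ g2) :
    vecEnorm g2 < vecEnorm g1 :=
  quadratic_regularization_norm_decreases_general m n A b 𝒢 h𝒢cv lam1 lam2 hlam1 hlam12 g1 g2 hg1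
    hg2 hmin1 hmin2 hne
end
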